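/- arXiv:2012.10022 — 2 statements merged into one kernel-verified Lean document; each statement's English description precedes it below -/
import Mathlib

section
/- Let γ : ℝ × [0,T) → ℝ² be a smooth family of closed regular planar curves evolving by normal speed F, i.e. ∂_t γ = F ν, with curvature k. Then for each integer ℓ ≥ 0 the ℓ-th arclength derivative of curvature evolves by ∂_t k_{s^ℓ} = ∂_s^{ℓ+2} F + Σ_{j=0}^{ℓ} ∂_s^j ( k · k_{s^{ℓ−j}} · F ). -/
open MeasureTheory Real Set

noncomputable section

/-- The Euclidean plane. -/
abbrev E2 : Type := EuclideanSpace ℝ (Fin 2)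

/-- Counterclockwise rotation by π/2. -/
def rot2 (v : E2) : E2 := (WithLp.equiv 2 (Fin 2 → ℝ)).symm ![-(v 1), v 0]

/-- Arclength derivative `∂ₛ f = |γ'|⁻¹ ∂ᵤ f` of a scalar function along `γ`. -/
def aderiv (γ : ℝ → E2) (f : ℝ → ℝ) : ℝ → ℝ := fun u => ‖deriv γ u‖⁻¹ * deriv f u

/-- Iterated arclength derivative `∂ₛᵐ f` along `γ`. -/
def aderivIter (γ : ℝ → E2) : ℕ → (ℝ → ℝ) → (ℝ → ℝ)
  | 0, f => f
  | (n+1), f => aderiv γ (aderivIter γ n f)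

/-- Unit tangent `τ = ∂ₛ γ`. -/
def tangentV (γ : ℝ → E2) : ℝ → E2 := fun u => ‖deriv γ u‖⁻¹ • deriv γ u

/-- Unit normal `ν`: counterclockwise rotation of `τ` by π/2. -/
def normalV (γ : ℝ → E2) : ℝ → E2 := fun u => rot2 (tangentV γ u)

/-- Signed curvature `k`, defined by `∂ₛ τ = k ν`, i.e. `k = ⟪∂ₛ τ, ν⟫`. -/
def curv (γ : ℝ → E2) : ℝ → ℝ :=
  fun u => (inner ℝ (‖deriv γ u‖⁻¹ • deriv (tangentV γ) u) (normalV γ u) : ℝ)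

/-- Iterated arclength derivatives of curvature: `curvD γ m = k_{sᵐ}`. -/
def curvD (γ : ℝ → E2) (m : ℕ) : ℝ → ℝ := aderivIter γ m (curv γ)

/-- Integral `∫ f ds = ∫₀^P f(u) |γ'(u)| du` over the curve. -/
def cint (γ : ℝ → E2) (P : ℝ) (f : ℝ → ℝ) : ℝ := ∫ u in (0:ℝ)..P, f u * ‖deriv γ u‖

/-- Length `L = ∫₀^P |γ'(u)| du`. -/
def clen (γ : ℝ → E2) (P : ℝ) : ℝ := ∫ u in (0:ℝ)..P, ‖deriv γ u‖

set_option maxHeartbeats 1000000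

namespace CDE

/-- The parabolic domain. -/
def St (T : ℝ) : Set (ℝ × ℝ) := univ ×ˢ Ico 0 T

lemma uds (T : ℝ) : UniqueDiffOn ℝ (St T) :=
  uniqueDiffOn_univ.prod (uniqueDiffOn_Ico 0 T)

lemma mem_St {T : ℝ} {p : ℝ × ℝ} : p ∈ St T ↔ p.2 ∈ Ico 0 T := by
  simp [St, Set.mem_prod]

lemma mem_St' {T u t : ℝ} (ht : t ∈ Ico 0 T) : (u, t) ∈ St T := mem_St.2 ht

lemma St_closure_interior {T : ℝ} {p : ℝ × ℝ} (hp : p ∈ St T) :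
    p ∈ closure (interior (St T)) := by
  have ht := mem_St.1 hp
  have hT : (0:ℝ) < T := lt_of_le_of_lt ht.1 ht.2
  rw [St, interior_prod_eq, interior_univ, interior_Ico, closure_prod_eq, closure_univ,
    closure_Ioo hT.ne]
  exact ⟨mem_univ _, ⟨ht.1, ht.2.le⟩⟩

variable {M : Type*} [NormedAddCommGroup M] [NormedSpace ℝ M]

/-- Partial derivative in direction `w`, within `St T`. -/
def Dp (T : ℝ) (f : ℝ × ℝ → M) (w : ℝ × ℝ) : ℝ × ℝ → M :=
  fun p => fderivWithin ℝ f (St T) p w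

lemma contDiffOn_Dp {T : ℝ} {f : ℝ × ℝ → M} (hf : ContDiffOn ℝ (⊤ : ℕ∞) f (St T)) (w : ℝ × ℝ) :
    ContDiffOn ℝ (⊤ : ℕ∞) (Dp T f w) (St T) :=
  (hf.fderivWithin (uds T) (by simp)).clm_apply contDiffOn_const

/-- Clairaut within `St T`. -/
lemma Dp_comm {T : ℝ} {f : ℝ × ℝ → M} (hf : ContDiffOn ℝ (⊤ : ℕ∞) f (St T)) {p : ℝ × ℝ}
    (hp : p ∈ St T) (w w' : ℝ × ℝ) :
    Dp T (Dp T f w) w' p = Dp T (Dp T f w') w p := by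
  have hsymm : IsSymmSndFDerivWithinAt ℝ f (St T) p :=
    (hf p hp).isSymmSndFDerivWithinAt (by simp [minSmoothness_of_isRCLikeNormedField]; exact WithTop.coe_le_coe.mpr (le_top : (2 : ℕ∞) ≤ ⊤)) (uds T)
      (St_closure_interior hp) hp
  have hdf : DifferentiableWithinAt ℝ (fderivWithin ℝ f (St T)) (St T) p :=
    ((hf.fderivWithin (m := (⊤ : ℕ∞)) (uds T) (by simp)).differentiableOn (by simp)) p hp
  have key : ∀ v : ℝ × ℝ, fderivWithin ℝ (fun q => fderivWithin ℝ f (St T) q v) (St T) p =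
      (fderivWithin ℝ (fderivWithin ℝ f (St T)) (St T) p).flip v := by
    intro v
    have h0 := fderivWithin_clm_apply (uds T p hp) hdf (differentiableWithinAt_const v)
    rw [fderivWithin_const_apply v] at h0
    simpa using h0
  show fderivWithin ℝ (fun q => fderivWithin ℝ f (St T) q w) (St T) p w'
      = fderivWithin ℝ (fun q => fderivWithin ℝ f (St T) q w') (St T) p w
  rw [key w, key w']
  exact hsymm w' w

/-- Derivative of the `u`-slice equals the joint partial in direction `(1,0)`. -/
lemma hasDerivAt_slice_u {T : ℝ} {f : ℝ × ℝ → M} {p : ℝ × ℝ} (hp : p ∈ St T)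
    (hf : DifferentiableWithinAt ℝ f (St T) p) :
    HasDerivAt (fun x => f (x, p.2)) (Dp T f (1, 0) p) p.1 := by
  have hg : HasDerivWithinAt (fun x : ℝ => (x, p.2)) ((1:ℝ), (0:ℝ)) univ p.1 :=
    ((hasDerivAt_id _).prodMk (hasDerivAt_const _ _)).hasDerivWithinAt
  have hmaps : MapsTo (fun x : ℝ => (x, p.2)) univ (St T) := fun x _ => mem_St.2 (mem_St.1 hp)
  have := hf.hasFDerivWithinAt.comp_hasDerivWithinAt p.1 hg hmaps
  rw [hasDerivWithinAt_univ] at this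
  exact this

lemma deriv_slice_u {T : ℝ} {f : ℝ × ℝ → M} {p : ℝ × ℝ} (hp : p ∈ St T)
    (hf : DifferentiableWithinAt ℝ f (St T) p) :
    deriv (fun x => f (x, p.2)) p.1 = Dp T f (1, 0) p :=
  (hasDerivAt_slice_u hp hf).deriv

/-- Derivative (within `Ico 0 T`) of the `t`-slice equals the joint partial in direction
`(0,1)`. -/
lemma hasDerivWithinAt_slice_t {T : ℝ} {f : ℝ × ℝ → M} {p : ℝ × ℝ} (hp : p ∈ St T)
    (hf : DifferentiableWithinAt ℝ f (St T) p) :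
    HasDerivWithinAt (fun s => f (p.1, s)) (Dp T f (0, 1) p) (Ico 0 T) p.2 := by
  have hg : HasDerivWithinAt (fun s : ℝ => (p.1, s)) ((0:ℝ), (1:ℝ)) (Ico 0 T) p.2 :=
    ((hasDerivAt_const _ _).prodMk (hasDerivAt_id _)).hasDerivWithinAt
  have hmaps : MapsTo (fun s : ℝ => (p.1, s)) (Ico 0 T) (St T) := fun s hs => mem_St.2 hs
  exact hf.hasFDerivWithinAt.comp_hasDerivWithinAt p.2 hg hmaps

lemma derivWithin_slice_t {T : ℝ} {f : ℝ × ℝ → M} {p : ℝ × ℝ} (hp : p ∈ St T)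
    (hf : DifferentiableWithinAt ℝ f (St T) p) :
    derivWithin (fun s => f (p.1, s)) (Ico 0 T) p.2 = Dp T f (0, 1) p :=
  (hasDerivWithinAt_slice_t hp hf).derivWithin (uniqueDiffOn_Ico 0 T p.2 (mem_St.1 hp))

@[simp] lemma rot2_apply_zero (v : E2) : rot2 v 0 = -(v 1) := rfl
@[simp] lemma rot2_apply_one (v : E2) : rot2 v 1 = v 0 := rfl

lemma inner_E2 (v w : E2) : (inner ℝ v w : ℝ) = v 0 * w 0 + v 1 * w 1 := by
  simp [PiLp.inner_apply, Fin.sum_univ_two, mul_comm]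

lemma E2_ext {v w : E2} (h0 : v 0 = w 0) (h1 : v 1 = w 1) : v = w := by
  ext i
  fin_cases i <;> assumption

@[simp] lemma add_apply (v w : E2) (i : Fin 2) : (v + w) i = v i + w i := rfl
@[simp] lemma smul_apply (c : ℝ) (v : E2) (i : Fin 2) : (c • v) i = c * v i := rfl
@[simp] lemma neg_apply (v : E2) (i : Fin 2) : (-v) i = -(v i) := rfl

lemma rot2_rot2 (v : E2) : rot2 (rot2 v) = -v := by
  apply E2_ext <;> simp

lemma inner_rot2_self (v : E2) : (inner ℝ (rot2 v) v : ℝ) = 0 := by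
  simp [inner_E2]; ring

lemma inner_rot2_rot2 (v w : E2) : (inner ℝ (rot2 v) (rot2 w) : ℝ) = inner ℝ v w := by
  simp [inner_E2]; ring

def rot2L : E2 →L[ℝ] E2 :=
  LinearMap.toContinuousLinearMap
    { toFun := rot2
      map_add' := fun v w => by apply E2_ext <;> simp <;> ring
      map_smul' := fun c v => by apply E2_ext <;> simp <;> ring }

@[simp] lemma rot2L_apply (v : E2) : rot2L v = rot2 v := rfl

lemma norm_sq_E2 (v : E2) : ‖v‖ ^ 2 = v 0 ^ 2 + v 1 ^ 2 := by
  rw [← real_inner_self_eq_norm_sq, inner_E2]; ring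

/-- Decomposition in the orthonormal basis `(τ, rot2 τ)`. -/
lemma decomp' {τ : E2} (hτ : ‖τ‖ = 1) (v : E2) :
    v = (inner ℝ v τ : ℝ) • τ + (inner ℝ v (rot2 τ) : ℝ) • rot2 τ := by
  have h : τ 0 ^ 2 + τ 1 ^ 2 = 1 := by rw [← norm_sq_E2, hτ]; norm_num
  apply E2_ext
  case h0 => simp [inner_E2]; linear_combination (-(v 0)) * h
  case h1 => simp [inner_E2]; linear_combination (-(v 1)) * h


section Geometry

variable (T : ℝ) (γ : ℝ → ℝ → E2)

def Gm : ℝ × ℝ → E2 := fun p => γ p.1 p.2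
def Vv : ℝ × ℝ → E2 := Dp T (Gm γ) (1, 0)
def nn : ℝ × ℝ → ℝ := fun p => ‖Vv T γ p‖
def tv : ℝ × ℝ → E2 := fun p => (nn T γ p)⁻¹ • Vv T γ p
def nv : ℝ × ℝ → E2 := fun p => rot2 (tv T γ p)
def kk : ℝ × ℝ → ℝ := fun p => inner ℝ ((nn T γ p)⁻¹ • Dp T (tv T γ) (1, 0) p) (nv T γ p)
def ad (f : ℝ × ℝ → ℝ) : ℝ × ℝ → ℝ := fun p => (nn T γ p)⁻¹ * Dp T f (1, 0) p
def adIter : ℕ → (ℝ × ℝ → ℝ) → ℝ × ℝ → ℝ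
  | 0, f => f
  | n + 1, f => ad T γ (adIter n f)
def kD (m : ℕ) : ℝ × ℝ → ℝ := adIter T γ m (kk T γ)

variable {T γ}
variable (hγ : ContDiffOn ℝ (⊤ : ℕ∞) (Gm γ) (St T))
variable (hreg : ∀ u, ∀ t ∈ Ico (0:ℝ) T, deriv (fun x => γ x t) u ≠ 0)

section Basic
include hγ

lemma contDiffOn_Vv : ContDiffOn ℝ (⊤ : ℕ∞) (Vv T γ) (St T) := contDiffOn_Dp hγ _

lemma deriv_gamma_slice {p : ℝ × ℝ} (hp : p ∈ St T) :
    deriv (fun x => γ x p.2) p.1 = Vv T γ p :=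
  deriv_slice_u hp (hγ.differentiableOn (by simp) p hp)

include hreg

lemma Vv_ne {p : ℝ × ℝ} (hp : p ∈ St T) : Vv T γ p ≠ 0 := by
  rw [← deriv_gamma_slice hγ hp]
  exact hreg p.1 p.2 (mem_St.1 hp)

lemma nn_pos {p : ℝ × ℝ} (hp : p ∈ St T) : 0 < nn T γ p :=
  norm_pos_iff.2 (Vv_ne hγ hreg hp)

lemma nn_ne {p : ℝ × ℝ} (hp : p ∈ St T) : nn T γ p ≠ 0 :=
  (nn_pos hγ hreg hp).ne'

lemma contDiffOn_nn : ContDiffOn ℝ (⊤ : ℕ∞) (nn T γ) (St T) :=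
  (contDiffOn_Vv hγ).norm ℝ (fun p hp => Vv_ne hγ hreg hp)

lemma contDiffOn_nninv : ContDiffOn ℝ (⊤ : ℕ∞) (fun p => (nn T γ p)⁻¹) (St T) :=
  (contDiffOn_nn hγ hreg).inv (fun p hp => nn_ne hγ hreg hp)

lemma contDiffOn_tv : ContDiffOn ℝ (⊤ : ℕ∞) (tv T γ) (St T) :=
  (contDiffOn_nninv hγ hreg).smul (contDiffOn_Vv hγ)

lemma contDiffOn_nv : ContDiffOn ℝ (⊤ : ℕ∞) (nv T γ) (St T) :=
  rot2L.contDiff.comp_contDiffOn (contDiffOn_tv hγ hreg)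

lemma contDiffOn_kk : ContDiffOn ℝ (⊤ : ℕ∞) (kk T γ) (St T) :=
  ContDiffOn.inner ℝ
    ((contDiffOn_nninv hγ hreg).smul (contDiffOn_Dp (contDiffOn_tv hγ hreg) _))
    (contDiffOn_nv hγ hreg)

lemma contDiffOn_ad {f : ℝ × ℝ → ℝ} (hf : ContDiffOn ℝ (⊤ : ℕ∞) f (St T)) :
    ContDiffOn ℝ (⊤ : ℕ∞) (ad T γ f) (St T) :=
  (contDiffOn_nninv hγ hreg).mul (contDiffOn_Dp hf _)

lemma contDiffOn_adIter {f : ℝ × ℝ → ℝ} (hf : ContDiffOn ℝ (⊤ : ℕ∞) f (St T)) (m : ℕ) :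
    ContDiffOn ℝ (⊤ : ℕ∞) (adIter T γ m f) (St T) := by
  induction m with
  | zero => exact hf
  | succ n ih => exact contDiffOn_ad hγ hreg ih

lemma contDiffOn_kD (m : ℕ) : ContDiffOn ℝ (⊤ : ℕ∞) (kD T γ m) (St T) :=
  contDiffOn_adIter hγ hreg (contDiffOn_kk hγ hreg) m

omit hreg in
lemma deriv_gamma_slice' (u : ℝ) {t : ℝ} (ht : t ∈ Ico (0:ℝ) T) :
    deriv (fun x => γ x t) u = Vv T γ (u, t) :=
  deriv_gamma_slice hγ (mem_St' ht)

omit hreg in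
lemma nn_slice (u : ℝ) {t : ℝ} (ht : t ∈ Ico (0:ℝ) T) :
    ‖deriv (fun x => γ x t) u‖ = nn T γ (u, t) := by
  rw [deriv_gamma_slice' hγ u ht]; rfl

lemma tangentV_slice (u : ℝ) {t : ℝ} (ht : t ∈ Ico (0:ℝ) T) :
    tangentV (fun x => γ x t) u = tv T γ (u, t) := by
  rw [tangentV, deriv_gamma_slice' hγ u ht]; rfl

lemma normalV_slice (u : ℝ) {t : ℝ} (ht : t ∈ Ico (0:ℝ) T) :
    normalV (fun x => γ x t) u = nv T γ (u, t) := by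
  rw [normalV, tangentV_slice hγ hreg u ht]; rfl

lemma curv_slice (u : ℝ) {t : ℝ} (ht : t ∈ Ico (0:ℝ) T) :
    curv (fun x => γ x t) u = kk T γ (u, t) := by
  have htv : tangentV (fun x => γ x t) = fun x => tv T γ (x, t) :=
    funext fun x => tangentV_slice hγ hreg x ht
  rw [curv, htv, nn_slice hγ u ht,
    deriv_slice_u (mem_St' ht) ((contDiffOn_tv hγ hreg).differentiableOn (by simp) _ (mem_St' ht))]
  rw [normalV_slice hγ hreg u ht]
  rfl

lemma aderiv_slice {f : ℝ × ℝ → ℝ} (hf : ContDiffOn ℝ (⊤ : ℕ∞) f (St T)) {t : ℝ}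
    (ht : t ∈ Ico (0:ℝ) T) (u : ℝ) :
    aderiv (fun x => γ x t) (fun x => f (x, t)) u = ad T γ f (u, t) := by
  rw [aderiv, nn_slice hγ u ht,
    deriv_slice_u (mem_St' ht) (hf.differentiableOn (by simp) _ (mem_St' ht))]
  rfl

lemma aderivIter_slice {f : ℝ × ℝ → ℝ} (hf : ContDiffOn ℝ (⊤ : ℕ∞) f (St T)) {t : ℝ}
    (ht : t ∈ Ico (0:ℝ) T) (m : ℕ) (u : ℝ) :
    aderivIter (fun x => γ x t) m (fun x => f (x, t)) u = adIter T γ m f (u, t) := by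
  induction m generalizing u with
  | zero => rfl
  | succ n ih =>
    show aderiv (fun x => γ x t) (aderivIter (fun x => γ x t) n (fun x => f (x, t))) u = _
    have hfn : aderivIter (fun x => γ x t) n (fun x => f (x, t))
        = fun x => adIter T γ n f (x, t) := funext fun x => ih x
    rw [hfn, aderiv_slice hγ hreg (contDiffOn_adIter hγ hreg hf n) ht u]
    rfl

lemma curvD_slice {t : ℝ} (ht : t ∈ Ico (0:ℝ) T) (m : ℕ) (u : ℝ) :
    curvD (fun x => γ x t) m u = kD T γ m (u, t) := by
  have hc : curv (fun x => γ x t) = fun x => kk T γ (x, t) :=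
    funext fun x => curv_slice hγ hreg x ht
  rw [curvD, hc, aderivIter_slice hγ hreg (contDiffOn_kk hγ hreg) ht m u]
  rfl

end Basic

end Geometry

section Calc

variable {T : ℝ} {M : Type*} [NormedAddCommGroup M] [NormedSpace ℝ M]

lemma Dp_congr {f g : ℝ × ℝ → M} (h : EqOn f g (St T)) {p : ℝ × ℝ} (hp : p ∈ St T)
    (w : ℝ × ℝ) : Dp T f w p = Dp T g w p := by
  unfold Dp
  rw [fderivWithin_congr h (h hp)]

lemma Dp_const (c : M) {p : ℝ × ℝ} (hp : p ∈ St T) (w : ℝ × ℝ) :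
    Dp T (fun _ => c) w p = 0 := by
  unfold Dp
  rw [fderivWithin_const_apply c]
  rfl

lemma Dp_smul {c : ℝ × ℝ → ℝ} {V : ℝ × ℝ → M} {p : ℝ × ℝ} (hp : p ∈ St T)
    (hc : DifferentiableWithinAt ℝ c (St T) p) (hV : DifferentiableWithinAt ℝ V (St T) p)
    (w : ℝ × ℝ) :
    Dp T (fun q => c q • V q) w p = c p • Dp T V w p + (Dp T c w p) • V p := by
  unfold Dp
  rw [fderivWithin_fun_smul (uds T p hp) hc hV]
  rfl

lemma Dp_mul {c d : ℝ × ℝ → ℝ} {p : ℝ × ℝ} (hp : p ∈ St T)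
    (hc : DifferentiableWithinAt ℝ c (St T) p) (hd : DifferentiableWithinAt ℝ d (St T) p)
    (w : ℝ × ℝ) :
    Dp T (fun q => c q * d q) w p = c p * Dp T d w p + d p * Dp T c w p := by
  unfold Dp
  rw [fderivWithin_fun_mul (uds T p hp) hc hd]
  rfl

lemma Dp_add {f g : ℝ × ℝ → M} {p : ℝ × ℝ} (hp : p ∈ St T)
    (hf : DifferentiableWithinAt ℝ f (St T) p) (hg : DifferentiableWithinAt ℝ g (St T) p)
    (w : ℝ × ℝ) :
    Dp T (fun q => f q + g q) w p = Dp T f w p + Dp T g w p := by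
  unfold Dp
  rw [fderivWithin_fun_add (uds T p hp) hf hg]
  rfl

lemma Dp_inner {f g : ℝ × ℝ → E2} {p : ℝ × ℝ} (hp : p ∈ St T)
    (hf : DifferentiableWithinAt ℝ f (St T) p) (hg : DifferentiableWithinAt ℝ g (St T) p)
    (w : ℝ × ℝ) :
    Dp T (fun q => (inner ℝ (f q) (g q) : ℝ)) w p
      = (inner ℝ (f p) (Dp T g w p) : ℝ) + (inner ℝ (Dp T f w p) (g p) : ℝ) := by
  unfold Dp
  rw [((hf.hasFDerivWithinAt.inner ℝ hg.hasFDerivWithinAt).fderivWithin (uds T p hp))]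
  simp [fderivInnerCLM]

lemma Dp_rot2 {f : ℝ × ℝ → E2} {p : ℝ × ℝ} (hp : p ∈ St T)
    (hf : DifferentiableWithinAt ℝ f (St T) p) (w : ℝ × ℝ) :
    Dp T (fun q => rot2 (f q)) w p = rot2 (Dp T f w p) := by
  unfold Dp
  have : fderivWithin ℝ (fun q => rot2L (f q)) (St T) p
      = rot2L.comp (fderivWithin ℝ f (St T) p) :=
    (rot2L.hasFDerivAt.comp_hasFDerivWithinAt p hf.hasFDerivWithinAt).fderivWithin (uds T p hp)
  simp only [rot2L_apply] at this
  rw [this]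
  rfl

lemma Dp_sum {ι : Type*} {s : Finset ι} {f : ι → ℝ × ℝ → M} {p : ℝ × ℝ} (hp : p ∈ St T)
    (hf : ∀ i ∈ s, DifferentiableWithinAt ℝ (f i) (St T) p) (w : ℝ × ℝ) :
    Dp T (fun q => ∑ i ∈ s, f i q) w p = ∑ i ∈ s, Dp T (f i) w p := by
  unfold Dp
  rw [fderivWithin_fun_sum (uds T p hp) hf]
  simp

end Calc

section Frame

variable {T : ℝ} {γ : ℝ → ℝ → E2}
variable (hγ : ContDiffOn ℝ (⊤ : ℕ∞) (Gm γ) (St T))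
variable (hreg : ∀ u, ∀ t ∈ Ico (0:ℝ) T, deriv (fun x => γ x t) u ≠ 0)

lemma dwaOf {M : Type*} [NormedAddCommGroup M] [NormedSpace ℝ M] {f : ℝ × ℝ → M}
    (hf : ContDiffOn ℝ (⊤ : ℕ∞) f (St T)) {p : ℝ × ℝ} (hp : p ∈ St T) :
    DifferentiableWithinAt ℝ f (St T) p := hf.differentiableOn (by simp) p hp

include hγ hreg

lemma norm_tv {p : ℝ × ℝ} (hp : p ∈ St T) : ‖tv T γ p‖ = 1 := by
  have hnn : nn T γ p = ‖Vv T γ p‖ := rfl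
  rw [tv, norm_smul, norm_inv, hnn, norm_norm]
  exact inv_mul_cancel₀ (nn_ne hγ hreg hp)

lemma inner_tv_tv {p : ℝ × ℝ} (hp : p ∈ St T) : (inner ℝ (tv T γ p) (tv T γ p) : ℝ) = 1 := by
  rw [real_inner_self_eq_norm_mul_norm, norm_tv hγ hreg hp]; norm_num

lemma inner_nv_nv {p : ℝ × ℝ} (hp : p ∈ St T) : (inner ℝ (nv T γ p) (nv T γ p) : ℝ) = 1 := by
  rw [nv, inner_rot2_rot2]; exact inner_tv_tv hγ hreg hp

lemma inner_nv_tv {p : ℝ × ℝ} (hp : p ∈ St T) : (inner ℝ (nv T γ p) (tv T γ p) : ℝ) = 0 :=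
  inner_rot2_self _

lemma inner_tv_nv {p : ℝ × ℝ} (hp : p ∈ St T) : (inner ℝ (tv T γ p) (nv T γ p) : ℝ) = 0 := by
  rw [real_inner_comm]; exact inner_nv_tv hγ hreg hp

lemma Vv_eq {p : ℝ × ℝ} (hp : p ∈ St T) : Vv T γ p = nn T γ p • tv T γ p := by
  rw [tv, smul_smul, mul_inv_cancel₀ (nn_ne hγ hreg hp), one_smul]

lemma Dp_tv_orth {p : ℝ × ℝ} (hp : p ∈ St T) (w : ℝ × ℝ) :
    (inner ℝ (Dp T (tv T γ) w p) (tv T γ p) : ℝ) = 0 := by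
  have h1 : EqOn (fun q => (inner ℝ (tv T γ q) (tv T γ q) : ℝ)) (fun _ => (1:ℝ)) (St T) :=
    fun q hq => inner_tv_tv hγ hreg hq
  have h2 : Dp T (fun q => (inner ℝ (tv T γ q) (tv T γ q) : ℝ)) w p = 0 := by
    rw [Dp_congr h1 hp w, Dp_const 1 hp w]
  rw [Dp_inner hp (dwaOf (contDiffOn_tv hγ hreg) hp) (dwaOf (contDiffOn_tv hγ hreg) hp) w]
    at h2
  rw [real_inner_comm] at h2
  linarith [h2]

lemma inner_Dp_tv_nv {p : ℝ × ℝ} (hp : p ∈ St T) :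
    (inner ℝ (Dp T (tv T γ) (1, 0) p) (nv T γ p) : ℝ) = nn T γ p * kk T γ p := by
  have hk : kk T γ p = (nn T γ p)⁻¹ * (inner ℝ (Dp T (tv T γ) (1, 0) p) (nv T γ p) : ℝ) := by
    rw [kk, real_inner_smul_left]
  rw [hk, ← mul_assoc, mul_inv_cancel₀ (nn_ne hγ hreg hp), one_mul]

lemma Du_tv {p : ℝ × ℝ} (hp : p ∈ St T) :
    Dp T (tv T γ) (1, 0) p = (nn T γ p * kk T γ p) • nv T γ p := by
  have := decomp' (norm_tv hγ hreg hp) (Dp T (tv T γ) (1, 0) p)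
  rw [Dp_tv_orth hγ hreg hp (1, 0), zero_smul, zero_add] at this
  rw [this]
  have : (inner ℝ (Dp T (tv T γ) (1, 0) p) (rot2 (tv T γ p)) : ℝ)
      = nn T γ p * kk T γ p := inner_Dp_tv_nv hγ hreg hp
  rw [this]
  rfl

lemma Du_nv {p : ℝ × ℝ} (hp : p ∈ St T) :
    Dp T (nv T γ) (1, 0) p = -((nn T γ p * kk T γ p) • tv T γ p) := by
  have h : Dp T (nv T γ) (1, 0) p = rot2 (Dp T (tv T γ) (1, 0) p) := by
    have : nv T γ = fun q => rot2 (tv T γ q) := rfl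
    rw [this, Dp_rot2 hp (dwaOf (contDiffOn_tv hγ hreg) hp)]
  rw [h, Du_tv hγ hreg hp, ← rot2L_apply, rot2L.map_smul, rot2L_apply]
  show (nn T γ p * kk T γ p) • rot2 (rot2 (tv T γ p)) = _
  rw [rot2_rot2, smul_neg]

end Frame

section Flow

variable {T : ℝ} {γ : ℝ → ℝ → E2} {F : ℝ → ℝ → ℝ}

def Fm (F : ℝ → ℝ → ℝ) : ℝ × ℝ → ℝ := fun p => F p.1 p.2

variable (hγ : ContDiffOn ℝ (⊤ : ℕ∞) (Gm γ) (St T))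
variable (hreg : ∀ u, ∀ t ∈ Ico (0:ℝ) T, deriv (fun x => γ x t) u ≠ 0)
variable (hF : ContDiffOn ℝ (⊤ : ℕ∞) (Fm F) (St T))
variable (hflow : ∀ u, ∀ t ∈ Ico (0:ℝ) T,
      HasDerivWithinAt (fun s => γ u s) (F u t • normalV (fun x => γ x t) u) (Ico 0 T) t)

include hγ hreg hF hflow

lemma Dt_Gm {p : ℝ × ℝ} (hp : p ∈ St T) :
    Dp T (Gm γ) (0, 1) p = Fm F p • nv T γ p := by
  have hu := uniqueDiffOn_Ico 0 T p.2 (mem_St.1 hp)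
  have h1 : HasDerivWithinAt (fun s => γ p.1 s) (Dp T (Gm γ) (0, 1) p) (Ico 0 T) p.2 :=
    hasDerivWithinAt_slice_t hp (dwaOf hγ hp)
  have h2 : HasDerivWithinAt (fun s => γ p.1 s)
      (F p.1 p.2 • normalV (fun x => γ x p.2) p.1) (Ico 0 T) p.2 :=
    hflow p.1 p.2 (mem_St.1 hp)
  have h3 := h1.derivWithin hu
  have h4 := h2.derivWithin hu
  rw [← h3, h4, normalV_slice hγ hreg p.1 (mem_St.1 hp)]
  rfl

lemma Dt_Vv {p : ℝ × ℝ} (hp : p ∈ St T) :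
    Dp T (Vv T γ) (0, 1) p
      = (Dp T (Fm F) (1, 0) p) • nv T γ p + Fm F p • Dp T (nv T γ) (1, 0) p := by
  have hcomm : Dp T (Vv T γ) (0, 1) p = Dp T (Dp T (Gm γ) (0, 1)) (1, 0) p :=
    Dp_comm hγ hp _ _
  have hcong : Dp T (Dp T (Gm γ) (0, 1)) (1, 0) p
      = Dp T (fun q => Fm F q • nv T γ q) (1, 0) p :=
    Dp_congr (fun q hq => Dt_Gm hγ hreg hF hflow hq) hp _
  rw [hcomm, hcong, Dp_smul hp (dwaOf hF hp) (dwaOf (contDiffOn_nv hγ hreg) hp), add_comm]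

lemma Dt_nn {p : ℝ × ℝ} (hp : p ∈ St T) :
    Dp T (nn T γ) (0, 1) p = -(kk T γ p * Fm F p * nn T γ p) := by
  have hVvD := dwaOf (contDiffOn_Vv hγ) hp
  have hnnD := dwaOf (contDiffOn_nn hγ hreg) hp
  have hVV : (fun q => (inner ℝ (Vv T γ q) (Vv T γ q) : ℝ)) = fun q => nn T γ q * nn T γ q := by
    funext q
    rw [real_inner_self_eq_norm_mul_norm]
    rfl
  have h1 : Dp T (fun q => (inner ℝ (Vv T γ q) (Vv T γ q) : ℝ)) (0, 1) p
      = 2 * (inner ℝ (Dp T (Vv T γ) (0, 1) p) (Vv T γ p) : ℝ) := by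
    rw [Dp_inner hp hVvD hVvD _, real_inner_comm]
    ring
  have h2 : Dp T (fun q => nn T γ q * nn T γ q) (0, 1) p
      = 2 * nn T γ p * Dp T (nn T γ) (0, 1) p := by
    rw [Dp_mul hp hnnD hnnD]
    ring
  have h3 : (inner ℝ (Dp T (Vv T γ) (0, 1) p) (Vv T γ p) : ℝ)
      = -(nn T γ p * nn T γ p * kk T γ p * Fm F p) := by
    rw [Dt_Vv hγ hreg hF hflow hp, Vv_eq hγ hreg hp, Du_nv hγ hreg hp]
    simp [inner_add_left, real_inner_smul_left, real_inner_smul_right, inner_neg_left,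
      inner_neg_right, inner_smul_left, inner_smul_right,
      inner_nv_tv hγ hreg hp, inner_tv_tv hγ hreg hp, norm_tv hγ hreg hp]
    ring
  have h4 : 2 * nn T γ p * Dp T (nn T γ) (0, 1) p
      = 2 * nn T γ p * -(kk T γ p * Fm F p * nn T γ p) := by
    rw [← h2, ← hVV, h1, h3]
    ring
  exact mul_left_cancel₀ (mul_ne_zero two_ne_zero (nn_ne hγ hreg hp)) h4

lemma Dt_tv {p : ℝ × ℝ} (hp : p ∈ St T) :
    Dp T (tv T γ) (0, 1) p = ad T γ (Fm F) p • nv T γ p := by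
  have hnnD := dwaOf (contDiffOn_nn hγ hreg) hp
  have htvD := dwaOf (contDiffOn_tv hγ hreg) hp
  have hVt : EqOn (Vv T γ) (fun q => nn T γ q • tv T γ q) (St T) :=
    fun q hq => Vv_eq hγ hreg hq
  have h1 : Dp T (Vv T γ) (0, 1) p
      = nn T γ p • Dp T (tv T γ) (0, 1) p + (Dp T (nn T γ) (0, 1) p) • tv T γ p := by
    rw [Dp_congr hVt hp _, Dp_smul hp hnnD htvD]
  have h2 : nn T γ p • Dp T (tv T γ) (0, 1) p = (Dp T (Fm F) (1, 0) p) • nv T γ p := by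
    have h3 := h1
    rw [Dt_Vv hγ hreg hF hflow hp, Dt_nn hγ hreg hF hflow hp, Du_nv hγ hreg hp] at h3
    linear_combination (norm := module) -h3
  have h6 := congrArg (fun v => (nn T γ p)⁻¹ • v) h2
  simp only [smul_smul, inv_mul_cancel₀ (nn_ne hγ hreg hp), one_smul] at h6
  rw [h6]
  rfl

lemma Dt_nv {p : ℝ × ℝ} (hp : p ∈ St T) :
    Dp T (nv T γ) (0, 1) p = -(ad T γ (Fm F) p • tv T γ p) := by
  have h : Dp T (nv T γ) (0, 1) p = rot2 (Dp T (tv T γ) (0, 1) p) := by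
    have hnv : nv T γ = fun q => rot2 (tv T γ q) := rfl
    rw [hnv, Dp_rot2 hp (dwaOf (contDiffOn_tv hγ hreg) hp)]
  rw [h, Dt_tv hγ hreg hF hflow hp, ← rot2L_apply, rot2L.map_smul, rot2L_apply]
  show ad T γ (Fm F) p • rot2 (rot2 (tv T γ p)) = _
  rw [rot2_rot2, smul_neg]

/-- The commutator `∂ₜ ∂ₛ = ∂ₛ ∂ₜ + kF ∂ₛ`, vector form. -/
lemma commut {M : Type*} [NormedAddCommGroup M] [NormedSpace ℝ M]
    {W : ℝ × ℝ → M} (hW : ContDiffOn ℝ (⊤ : ℕ∞) W (St T)) {p : ℝ × ℝ} (hp : p ∈ St T) :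
    Dp T (fun q => (nn T γ q)⁻¹ • Dp T W (1, 0) q) (0, 1) p
      = (kk T γ p * Fm F p) • ((nn T γ p)⁻¹ • Dp T W (1, 0) p)
        + (nn T γ p)⁻¹ • Dp T (Dp T W (0, 1)) (1, 0) p := by
  have hnnD := dwaOf (contDiffOn_nn hγ hreg) hp
  have hψ : ContDiffOn ℝ (⊤ : ℕ∞) (fun q => (nn T γ q)⁻¹ • Dp T W (1, 0) q) (St T) :=
    (contDiffOn_nninv hγ hreg).smul (contDiffOn_Dp hW _)
  have hEq : EqOn (Dp T W (1, 0))
      (fun q => nn T γ q • ((nn T γ q)⁻¹ • Dp T W (1, 0) q)) (St T) := by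
    intro q hq
    show Dp T W (1, 0) q = nn T γ q • ((nn T γ q)⁻¹ • Dp T W (1, 0) q)
    rw [smul_smul, mul_inv_cancel₀ (nn_ne hγ hreg hq), one_smul]
  have h1 : Dp T (Dp T W (1, 0)) (0, 1) p
      = nn T γ p • Dp T (fun q => (nn T γ q)⁻¹ • Dp T W (1, 0) q) (0, 1) p
        + (Dp T (nn T γ) (0, 1) p) • ((nn T γ p)⁻¹ • Dp T W (1, 0) p) := by
    rw [Dp_congr hEq hp _, Dp_smul hp hnnD (dwaOf hψ hp)]
  rw [Dp_comm hW hp (1, 0) (0, 1), Dt_nn hγ hreg hF hflow hp] at h1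
  have hD : nn T γ p • ((nn T γ p)⁻¹ • Dp T (Dp T W (0, 1)) (1, 0) p)
      = Dp T (Dp T W (0, 1)) (1, 0) p := by
    rw [smul_smul, mul_inv_cancel₀ (nn_ne hγ hreg hp), one_smul]
  refine smul_right_injective M (nn_ne hγ hreg hp) ?_
  show nn T γ p • _ = nn T γ p • _
  rw [smul_add, hD, h1]
  module

/-- The commutator, scalar form, expressed with `ad`. -/
lemma commut_scal {f : ℝ × ℝ → ℝ} (hf : ContDiffOn ℝ (⊤ : ℕ∞) f (St T)) {p : ℝ × ℝ}
    (hp : p ∈ St T) :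
    Dp T (ad T γ f) (0, 1) p
      = kk T γ p * Fm F p * ad T γ f p
        + (nn T γ p)⁻¹ * Dp T (Dp T f (0, 1)) (1, 0) p := by
  have h := commut hγ hreg hF hflow hf hp
  have had : ad T γ f = fun q => (nn T γ q)⁻¹ • Dp T f (1, 0) q := by
    funext q
    rw [smul_eq_mul]
    rfl
  rw [had, h]
  simp only [smul_eq_mul]

lemma Dt_kk {p : ℝ × ℝ} (hp : p ∈ St T) :
    Dp T (kk T γ) (0, 1) p = adIter T γ 2 (Fm F) p + kk T γ p * kk T γ p * Fm F p := by
  have hψC : ContDiffOn ℝ (⊤ : ℕ∞) (fun q => (nn T γ q)⁻¹ • Dp T (tv T γ) (1, 0) q) (St T) :=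
    (contDiffOn_nninv hγ hreg).smul (contDiffOn_Dp (contDiffOn_tv hγ hreg) _)
  have h1 : Dp T (kk T γ) (0, 1) p
      = (inner ℝ ((nn T γ p)⁻¹ • Dp T (tv T γ) (1, 0) p) (Dp T (nv T γ) (0, 1) p) : ℝ)
        + (inner ℝ (Dp T (fun q => (nn T γ q)⁻¹ • Dp T (tv T γ) (1, 0) q) (0, 1) p)
            (nv T γ p) : ℝ) := by
    have hkk : kk T γ = fun q =>
        (inner ℝ ((nn T γ q)⁻¹ • Dp T (tv T γ) (1, 0) q) (nv T γ q) : ℝ) := rfl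
    rw [hkk, Dp_inner hp (dwaOf hψC hp) (dwaOf (contDiffOn_nv hγ hreg) hp)]
  have hψp : (nn T γ p)⁻¹ • Dp T (tv T γ) (1, 0) p = kk T γ p • nv T γ p := by
    rw [Du_tv hγ hreg hp, smul_smul, ← mul_assoc, inv_mul_cancel₀ (nn_ne hγ hreg hp), one_mul]
  have h2 := commut hγ hreg hF hflow (contDiffOn_tv hγ hreg) hp
  have h3 : Dp T (Dp T (tv T γ) (0, 1)) (1, 0) p
      = Dp T (fun q => ad T γ (Fm F) q • nv T γ q) (1, 0) p :=
    Dp_congr (fun q hq => Dt_tv hγ hreg hF hflow hq) hp _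
  have h4 : Dp T (fun q => ad T γ (Fm F) q • nv T γ q) (1, 0) p
      = ad T γ (Fm F) p • Dp T (nv T γ) (1, 0) p
        + (Dp T (ad T γ (Fm F)) (1, 0) p) • nv T γ p :=
    Dp_smul hp (dwaOf (contDiffOn_ad hγ hreg hF) hp) (dwaOf (contDiffOn_nv hγ hreg) hp) (1, 0)
  have hadIter2 : adIter T γ 2 (Fm F) p
      = (nn T γ p)⁻¹ * Dp T (ad T γ (Fm F)) (1, 0) p := rfl
  rw [h1, h2, h3, h4, hψp, Dt_nv hγ hreg hF hflow hp, Du_nv hγ hreg hp, hadIter2]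
  simp only [inner_add_left, inner_add_right, smul_add, real_inner_smul_left,
    real_inner_smul_right, inner_neg_left, inner_neg_right, smul_neg, smul_smul,
    inner_nv_nv hγ hreg hp, inner_tv_nv hγ hreg hp, inner_nv_tv hγ hreg hp,
    inner_tv_tv hγ hreg hp]
  ring

omit hflow in
lemma contDiffOn_summand (ℓ j : ℕ) :
    ContDiffOn ℝ (⊤ : ℕ∞) (fun q => kk T γ q * kD T γ (ℓ - j) q * Fm F q) (St T) :=
  ((contDiffOn_kk hγ hreg).mul (contDiffOn_kD hγ hreg _)).mul hF

/-- Main induction: evolution of `k_{s^ℓ}` in the joint formulation. -/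
lemma Dt_kD (ℓ : ℕ) {p : ℝ × ℝ} (hp : p ∈ St T) :
    Dp T (kD T γ ℓ) (0, 1) p
      = adIter T γ (ℓ + 2) (Fm F) p
        + ∑ j ∈ Finset.range (ℓ + 1),
            adIter T γ j (fun q => kk T γ q * kD T γ (ℓ - j) q * Fm F q) p := by
  induction ℓ generalizing p with
  | zero =>
    rw [Finset.sum_range_one]
    exact Dt_kk hγ hreg hF hflow hp
  | succ ℓ ih =>
    have hcom := commut_scal hγ hreg hF hflow (contDiffOn_kD hγ hreg ℓ) hp
    have hstep : Dp T (kD T γ (ℓ + 1)) (0, 1) p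
        = kk T γ p * Fm F p * kD T γ (ℓ + 1) p
          + (nn T γ p)⁻¹ * Dp T (Dp T (kD T γ ℓ) (0, 1)) (1, 0) p := hcom
    have hcong : Dp T (Dp T (kD T γ ℓ) (0, 1)) (1, 0) p
        = Dp T (fun q => adIter T γ (ℓ + 2) (Fm F) q
            + ∑ j ∈ Finset.range (ℓ + 1),
                adIter T γ j (fun q' => kk T γ q' * kD T γ (ℓ - j) q' * Fm F q') q)
            (1, 0) p :=
      Dp_congr (fun q hq => ih hq) hp _
    have hsplit : Dp T (fun q => adIter T γ (ℓ + 2) (Fm F) q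
            + ∑ j ∈ Finset.range (ℓ + 1),
                adIter T γ j (fun q' => kk T γ q' * kD T γ (ℓ - j) q' * Fm F q') q)
            (1, 0) p
        = Dp T (adIter T γ (ℓ + 2) (Fm F)) (1, 0) p
          + ∑ j ∈ Finset.range (ℓ + 1),
              Dp T (adIter T γ j (fun q' => kk T γ q' * kD T γ (ℓ - j) q' * Fm F q'))
                (1, 0) p := by
      rw [Dp_add hp (dwaOf (contDiffOn_adIter hγ hreg hF _) hp)
        (dwaOf (ContDiffOn.sum fun j _ =>
          contDiffOn_adIter hγ hreg (contDiffOn_summand hγ hreg hF ℓ j) j) hp),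
        Dp_sum hp (fun j _ =>
          dwaOf (contDiffOn_adIter hγ hreg (contDiffOn_summand hγ hreg hF ℓ j) j) hp)]
    rw [hstep, hcong, hsplit, mul_add, Finset.mul_sum]
    have e1 : (nn T γ p)⁻¹ * Dp T (adIter T γ (ℓ + 2) (Fm F)) (1, 0) p
        = adIter T γ (ℓ + 1 + 2) (Fm F) p := rfl
    have e2 : ∀ j, (nn T γ p)⁻¹
          * Dp T (adIter T γ j (fun q' => kk T γ q' * kD T γ (ℓ - j) q' * Fm F q')) (1, 0) p
        = adIter T γ (j + 1) (fun q' => kk T γ q' * kD T γ (ℓ - j) q' * Fm F q') p :=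
      fun j => rfl
    have e3 : kk T γ p * Fm F p * kD T γ (ℓ + 1) p
        = adIter T γ 0 (fun q' => kk T γ q' * kD T γ (ℓ + 1 - 0) q' * Fm F q') p := by
      show _ = kk T γ p * kD T γ (ℓ + 1) p * Fm F p
      ring
    simp only [e2]
    rw [e1, e3]
    have e4 : ∑ j ∈ Finset.range (ℓ + 1),
          adIter T γ (j + 1) (fun q' => kk T γ q' * kD T γ (ℓ - j) q' * Fm F q') p
        = ∑ j ∈ Finset.range (ℓ + 1),
            adIter T γ (j + 1)
              (fun q' => kk T γ q' * kD T γ (ℓ + 1 - (j + 1)) q' * Fm F q') p := by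
      apply Finset.sum_congr rfl
      intro j hj
      have : ℓ + 1 - (j + 1) = ℓ - j := Nat.succ_sub_succ ℓ j
      rw [this]
    rw [e4, Finset.sum_range_succ'
      (fun j => adIter T γ j (fun q' => kk T γ q' * kD T γ (ℓ + 1 - j) q' * Fm F q') p) (ℓ + 1)]
    ring

end Flow

end CDE

/-- **Evolution of curvature derivatives.**  Under flow by normal speed `F`, for each `ℓ ≥ 0`,
`∂ₜ k_{s^ℓ} = ∂ₛ^{ℓ+2} F + Σ_{j=0}^{ℓ} ∂ₛ^j (k k_{s^{ℓ−j}} F)`. -/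
theorem curvature_derivative_evolution
    (T P : ℝ) (hT : 0 < T) (hP : 0 < P)
    (γ : ℝ → ℝ → E2) (F : ℝ → ℝ → ℝ)
    (hγ : ContDiffOn ℝ (⊤ : ℕ∞) (fun p : ℝ × ℝ => γ p.1 p.2) (univ ×ˢ Ico 0 T))
    (hF : ContDiffOn ℝ (⊤ : ℕ∞) (fun p : ℝ × ℝ => F p.1 p.2) (univ ×ˢ Ico 0 T))
    (hper : ∀ u, ∀ t ∈ Ico (0:ℝ) T, γ (u + P) t = γ u t)
    (hreg : ∀ u, ∀ t ∈ Ico (0:ℝ) T, deriv (fun x => γ x t) u ≠ 0)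
    (hflow : ∀ u, ∀ t ∈ Ico (0:ℝ) T,
      HasDerivWithinAt (fun s => γ u s) (F u t • normalV (fun x => γ x t) u) (Ico 0 T) t)
    :
    ∀ ℓ : ℕ, ∀ u, ∀ t ∈ Ico (0:ℝ) T,
      derivWithin (fun s => curvD (fun x => γ x s) ℓ u) (Ico 0 T) t
        = aderivIter (fun x => γ x t) (ℓ + 2) (fun x => F x t) u
          + ∑ j ∈ Finset.range (ℓ + 1),
              aderivIter (fun x => γ x t) j
                (fun x => curv (fun x => γ x t) x * curvD (fun x => γ x t) (ℓ - j) x * F x t)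
                u := by
  intro ℓ u t ht
  have hγ' : ContDiffOn ℝ (⊤ : ℕ∞) (CDE.Gm γ) (CDE.St T) := hγ
  have hF' : ContDiffOn ℝ (⊤ : ℕ∞) (CDE.Fm F) (CDE.St T) := hF
  have hL : derivWithin (fun s => curvD (fun x => γ x s) ℓ u) (Ico 0 T) t
      = CDE.Dp T (CDE.kD T γ ℓ) (0, 1) (u, t) := by
    have heq : EqOn (fun s => curvD (fun x => γ x s) ℓ u)
        (fun s => CDE.kD T γ ℓ (u, s)) (Ico 0 T) :=
      fun s hs => CDE.curvD_slice hγ' hreg hs ℓ u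
    rw [derivWithin_congr heq (heq ht)]
    exact CDE.derivWithin_slice_t (CDE.mem_St' ht)
      (CDE.dwaOf (CDE.contDiffOn_kD hγ' hreg ℓ) (CDE.mem_St' ht))
  have hR1 : aderivIter (fun x => γ x t) (ℓ + 2) (fun x => F x t) u
      = CDE.adIter T γ (ℓ + 2) (CDE.Fm F) (u, t) :=
    CDE.aderivIter_slice hγ' hreg hF' ht (ℓ + 2) u
  have hR2 : ∀ j, aderivIter (fun x => γ x t) j
        (fun x => curv (fun x' => γ x' t) x * curvD (fun x' => γ x' t) (ℓ - j) x * F x t) u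
      = CDE.adIter T γ j
          (fun q => CDE.kk T γ q * CDE.kD T γ (ℓ - j) q * CDE.Fm F q) (u, t) := by
    intro j
    have hfeq : (fun x => curv (fun x' => γ x' t) x * curvD (fun x' => γ x' t) (ℓ - j) x
          * F x t)
        = fun x => (fun q => CDE.kk T γ q * CDE.kD T γ (ℓ - j) q * CDE.Fm F q) (x, t) := by
      funext x
      rw [CDE.curv_slice hγ' hreg x ht, CDE.curvD_slice hγ' hreg ht (ℓ - j) x]
      rfl
    rw [hfeq]
    exact CDE.aderivIter_slice hγ' hreg (CDE.contDiffOn_summand hγ' hreg hF' ℓ j) ht j u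
  rw [hL, CDE.Dt_kD hγ' hreg hF' hflow ℓ (CDE.mem_St' ht), hR1]
  congr 1
  exact Finset.sum_congr rfl (fun j _ => (hR2 j).symm)
end
end

section
/- Let γ : ℝ × [0,T) → ℝ² be a smooth solution of the length-constrained ideal curve flow, i.e. the normal component of ∂_t γ equals G + h(t) where G = k_{s⁴} + k² k_{ss} − ½ k k_s² and h(t) = (1/(2πω)) ( −∫ k_{ss}² ds + (7/2) ∫ k_s² k² ds ), with ω the (constant) winding number. Then the length of the evolving curve is constant: L[γ(·,t)] = L[γ(·,0)] for all t ∈ [0,T). -/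
open MeasureTheory Real Set

noncomputable section

/-- `G = k_{s⁴} + k² k_{ss} − ½ k k_s²`. -/
def Gq (γ : ℝ → E2) : ℝ → ℝ :=
  fun u => curvD γ 4 u + (curv γ u) ^ 2 * curvD γ 2 u - (1 / 2) * curv γ u * (curvD γ 1 u) ^ 2

/-- The constraint term `h = (1/(2πω)) (−∫ k_{ss}² ds + (7/2) ∫ k_s² k² ds)`. -/
def hTerm (γ : ℝ → E2) (P : ℝ) (ω : ℤ) : ℝ :=
  (1 / (2 * π * ω)) * (-(cint γ P (fun u => (curvD γ 2 u) ^ 2))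
    + (7 / 2) * cint γ P (fun u => (curvD γ 1 u) ^ 2 * (curv γ u) ^ 2))

/-- Energy `E[γ] = ½ ∫ k_s² ds`. -/
def energy (γ : ℝ → E2) (P : ℝ) : ℝ := (1 / 2) * cint γ P (fun u => (curvD γ 1 u) ^ 2)


lemma rot2_apply0 (v : E2) : rot2 v 0 = -(v 1) := by
  simp [rot2, WithLp.equiv_symm_apply]
lemma rot2_apply1 (v : E2) : rot2 v 1 = v 0 := by
  simp [rot2, WithLp.equiv_symm_apply]

lemma inner_E2 (v w : E2) : (inner ℝ v w : ℝ) = v 0 * w 0 + v 1 * w 1 := by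
  simp [PiLp.inner_apply, Fin.sum_univ_two, RCLike.inner_apply, mul_comm]

lemma norm_sq_E2 (v : E2) : ‖v‖^2 = v 0 ^ 2 + v 1 ^ 2 := by
  rw [← real_inner_self_eq_norm_sq, inner_E2]; ring

def rotL : E2 →L[ℝ] E2 :=
  LinearMap.toContinuousLinearMap
  { toFun := rot2
    map_add' := by
      intro x y; apply PiLp.ext; intro i
      fin_cases i <;>
        simp only [Fin.zero_eta, Fin.mk_one, rot2_apply0, rot2_apply1, PiLp.add_apply] <;> ring
    map_smul' := by
      intro c x; apply PiLp.ext; intro i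
      fin_cases i <;>
        simp only [Fin.zero_eta, Fin.mk_one, rot2_apply0, rot2_apply1, PiLp.smul_apply,
          smul_eq_mul, RingHom.id_apply] <;> ring }

lemma rotL_apply (v : E2) : rotL v = rot2 v := rfl

lemma inner_rot2_self (v : E2) : (inner ℝ (rot2 v) v : ℝ) = 0 := by
  simp [inner_E2, rot2_apply0, rot2_apply1]; ring

lemma norm_rot2 (v : E2) : ‖rot2 v‖ = ‖v‖ := by
  rw [EuclideanSpace.norm_eq, EuclideanSpace.norm_eq]
  congr 1
  simp [Fin.sum_univ_two, rot2_apply0, rot2_apply1]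
  ring

lemma decomp (τ w : E2) (h : ‖τ‖ = 1) :
    w = (inner ℝ w τ : ℝ) • τ + (inner ℝ w (rot2 τ) : ℝ) • rot2 τ := by
  have h2 : τ 0 ^ 2 + τ 1 ^ 2 = 1 := by rw [← norm_sq_E2, h]; norm_num
  apply PiLp.ext; intro i
  fin_cases i <;>
    simp only [Fin.zero_eta, Fin.mk_one, inner_E2, rot2_apply0, rot2_apply1, PiLp.add_apply,
      PiLp.smul_apply, smul_eq_mul]
  · linear_combination -w 0 * h2
  · linear_combination -w 1 * h2

section Slice
variable {g : ℝ → E2} {P : ℝ}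

lemma deriv_g_smooth (hg : ContDiff ℝ (⊤:ℕ∞) g) : ContDiff ℝ (⊤:ℕ∞) (deriv g) :=
  (contDiff_infty_iff_deriv.mp hg).2

lemma q_smooth (hg : ContDiff ℝ (⊤:ℕ∞) g) (hreg : ∀ u, deriv g u ≠ 0) :
    ContDiff ℝ (⊤:ℕ∞) (fun u => ‖deriv g u‖) := by
  rw [contDiff_iff_contDiffAt]
  exact fun u => ((deriv_g_smooth hg).contDiffAt).norm ℝ (hreg u)

lemma q_pos (hreg : ∀ u, deriv g u ≠ 0) (u : ℝ) : 0 < ‖deriv g u‖ :=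
  norm_pos_iff.mpr (hreg u)

lemma qinv_smooth (hg : ContDiff ℝ (⊤:ℕ∞) g) (hreg : ∀ u, deriv g u ≠ 0) :
    ContDiff ℝ (⊤:ℕ∞) (fun u => ‖deriv g u‖⁻¹) := by
  rw [contDiff_iff_contDiffAt]
  exact fun u => ((q_smooth hg hreg).contDiffAt).inv (ne_of_gt (q_pos hreg u))

lemma tangent_smooth (hg : ContDiff ℝ (⊤:ℕ∞) g) (hreg : ∀ u, deriv g u ≠ 0) :
    ContDiff ℝ (⊤:ℕ∞) (tangentV g) :=
  (qinv_smooth hg hreg).smul (deriv_g_smooth hg)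

lemma deriv_tangent_smooth (hg : ContDiff ℝ (⊤:ℕ∞) g) (hreg : ∀ u, deriv g u ≠ 0) :
    ContDiff ℝ (⊤:ℕ∞) (deriv (tangentV g)) :=
  (contDiff_infty_iff_deriv.mp (tangent_smooth hg hreg)).2

lemma normal_smooth (hg : ContDiff ℝ (⊤:ℕ∞) g) (hreg : ∀ u, deriv g u ≠ 0) :
    ContDiff ℝ (⊤:ℕ∞) (normalV g) := by
  have : normalV g = fun u => rotL (tangentV g u) := rfl
  rw [this]
  exact rotL.contDiff.comp (tangent_smooth hg hreg)

lemma curv_smooth (hg : ContDiff ℝ (⊤:ℕ∞) g) (hreg : ∀ u, deriv g u ≠ 0) :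
    ContDiff ℝ (⊤:ℕ∞) (curv g) :=
  ContDiff.inner ℝ ((qinv_smooth hg hreg).smul (deriv_tangent_smooth hg hreg))
    (normal_smooth hg hreg)

lemma aderiv_smooth (hg : ContDiff ℝ (⊤:ℕ∞) g) (hreg : ∀ u, deriv g u ≠ 0)
    {f : ℝ → ℝ} (hf : ContDiff ℝ (⊤:ℕ∞) f) : ContDiff ℝ (⊤:ℕ∞) (aderiv g f) :=
  (qinv_smooth hg hreg).mul (contDiff_infty_iff_deriv.mp hf).2

lemma curvD_smooth (hg : ContDiff ℝ (⊤:ℕ∞) g) (hreg : ∀ u, deriv g u ≠ 0) (m : ℕ) :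
    ContDiff ℝ (⊤:ℕ∞) (curvD g m) := by
  induction m with
  | zero => exact curv_smooth hg hreg
  | succ n ih => exact aderiv_smooth hg hreg ih

/-- Periodicity of derivative of a periodic function. -/
lemma periodic_deriv' {F : Type*} [NormedAddCommGroup F] [NormedSpace ℝ F]
    (f : ℝ → F) (hf : ∀ u, f (u + P) = f u) (u : ℝ) : deriv f (u + P) = deriv f u := by
  have : (fun x => f (x + P)) = f := funext hf
  rw [← deriv_comp_add_const f P u, this]

lemma tangent_periodic (hper : ∀ u, g (u + P) = g u) (u : ℝ) :
    tangentV g (u + P) = tangentV g u := by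
  unfold tangentV; rw [periodic_deriv' g hper]

lemma curv_periodic (hper : ∀ u, g (u + P) = g u) (u : ℝ) :
    curv g (u + P) = curv g u := by
  unfold curv normalV
  rw [periodic_deriv' g hper, periodic_deriv' (tangentV g) (tangent_periodic hper),
    tangent_periodic hper]

lemma aderiv_periodic {f : ℝ → ℝ} (hper : ∀ u, g (u + P) = g u)
    (hf : ∀ u, f (u + P) = f u) (u : ℝ) : aderiv g f (u + P) = aderiv g f u := by
  unfold aderiv; rw [periodic_deriv' g hper, periodic_deriv' f hf]

lemma curvD_periodic (hper : ∀ u, g (u + P) = g u) (m : ℕ) (u : ℝ) :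
    curvD g m (u + P) = curvD g m u := by
  induction m generalizing u with
  | zero => exact curv_periodic hper u
  | succ n ih => exact aderiv_periodic hper ih u

end Slice
section Slice2
variable {g : ℝ → E2} {P : ℝ}

lemma one_le_inf : (1 : WithTop ℕ∞) ≤ ((⊤:ℕ∞) : WithTop ℕ∞) := by
  exact_mod_cast (le_top : (1:ℕ∞) ≤ ⊤)

lemma inf_ne_zero : ((⊤:ℕ∞) : WithTop ℕ∞) ≠ 0 := by simp

lemma norm_tangent (hreg : ∀ u, deriv g u ≠ 0) (u : ℝ) : ‖tangentV g u‖ = 1 := by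
  unfold tangentV
  rw [norm_smul, norm_inv, norm_norm, inv_mul_cancel₀ (ne_of_gt (q_pos hreg u))]

lemma inner_deriv_tangent_tangent (hg : ContDiff ℝ (⊤:ℕ∞) g) (hreg : ∀ u, deriv g u ≠ 0)
    (u : ℝ) : (inner ℝ (deriv (tangentV g) u) (tangentV g u) : ℝ) = 0 := by
  have hτ : ∀ x, HasDerivAt (tangentV g) (deriv (tangentV g) x) x := fun x =>
    (((tangent_smooth hg hreg).differentiable inf_ne_zero) x).hasDerivAt
  have hconst : (fun x => (inner ℝ (tangentV g x) (tangentV g x) : ℝ)) = fun _ => 1 := by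
    funext x
    rw [real_inner_self_eq_norm_sq, norm_tangent hreg x]; norm_num
  have hD : HasDerivAt (fun x => (inner ℝ (tangentV g x) (tangentV g x) : ℝ))
      ((inner ℝ (tangentV g u) (deriv (tangentV g) u) : ℝ)
        + (inner ℝ (deriv (tangentV g) u) (tangentV g u) : ℝ)) u :=
    (hτ u).inner ℝ (hτ u)
  rw [hconst] at hD
  have h0 := (hasDerivAt_const u (1:ℝ)).unique hD
  rw [real_inner_comm (tangentV g u)] at h0
  rw [real_inner_comm]
  linarith

/-- Frenet equation: `τ' = (q k) ν`. -/
lemma frenet (hg : ContDiff ℝ (⊤:ℕ∞) g) (hreg : ∀ u, deriv g u ≠ 0) (u : ℝ) :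
    deriv (tangentV g) u = (‖deriv g u‖ * curv g u) • normalV g u := by
  have hd := decomp (tangentV g u) (deriv (tangentV g) u) (norm_tangent hreg u)
  rw [inner_deriv_tangent_tangent hg hreg u] at hd
  have hk : (inner ℝ (deriv (tangentV g) u) (rot2 (tangentV g u)) : ℝ)
      = ‖deriv g u‖ * curv g u := by
    have hcu : curv g u
        = ‖deriv g u‖⁻¹ * (inner ℝ (deriv (tangentV g) u) (rot2 (tangentV g u)) : ℝ) := by
      unfold curv normalV
      rw [inner_smul_left]
      simp
    rw [hcu, mul_inv_cancel_left₀ (ne_of_gt (q_pos hreg u))]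
  rw [hk] at hd
  rw [zero_smul, zero_add] at hd
  exact hd

/-- Basic IBP: for smooth periodic f, h:
 `∫ f ⬝ ∂ₛh ds = - ∫ ∂ₛf ⬝ h ds`. -/
lemma cint_IBP (hg : ContDiff ℝ (⊤:ℕ∞) g) (hreg : ∀ u, deriv g u ≠ 0)
    (hper : ∀ u, g (u + P) = g u)
    {f h : ℝ → ℝ} (hf : ContDiff ℝ (⊤:ℕ∞) f) (hh : ContDiff ℝ (⊤:ℕ∞) h)
    (pf : ∀ u, f (u + P) = f u) (ph : ∀ u, h (u + P) = h u) :
    cint g P (fun u => f u * aderiv g h u) = - cint g P (fun u => aderiv g f u * h u) := by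
  have hf' : Continuous (deriv f) := ((contDiff_infty_iff_deriv.mp hf).2).continuous
  have hh' : Continuous (deriv h) := ((contDiff_infty_iff_deriv.mp hh).2).continuous
  have hfc : Continuous f := hf.continuous
  have hhc : Continuous h := hh.continuous
  have e1 : cint g P (fun u => f u * aderiv g h u) = ∫ u in (0:ℝ)..P, f u * deriv h u := by
    unfold cint aderiv
    congr 1; funext u
    have := ne_of_gt (q_pos hreg u)
    field_simp
  have e2 : cint g P (fun u => aderiv g f u * h u) = ∫ u in (0:ℝ)..P, deriv f u * h u := by
    unfold cint aderiv
    congr 1; funext u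
    have := ne_of_gt (q_pos hreg u)
    field_simp
  rw [e1, e2]
  have hprod : ∀ u : ℝ, HasDerivAt (fun x => f x * h x) (deriv f u * h u + f u * deriv h u) u :=
    fun u => ((hf.differentiable inf_ne_zero u).hasDerivAt).mul ((hh.differentiable inf_ne_zero u).hasDerivAt)
  have hint : ∫ u in (0:ℝ)..P, (deriv f u * h u + f u * deriv h u)
      = f P * h P - f 0 * h 0 := by
    have := intervalIntegral.integral_deriv_eq_sub (f := fun x => f x * h x)
      (a := 0) (b := P)
      (fun x _ => (hprod x).differentiableAt)
      ?_
    · rw [← this]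
      congr 1; funext u
      exact ((hprod u).deriv).symm
    · apply Continuous.intervalIntegrable
      have : deriv (fun x => f x * h x) = fun u => deriv f u * h u + f u * deriv h u :=
        funext fun u => (hprod u).deriv
      rw [this]
      exact ((hf'.mul hhc).add (hfc.mul hh'))
  have hzero : f P * h P - f 0 * h 0 = 0 := by
    have e3 : f P = f 0 := by simpa using pf 0
    have e4 : h P = h 0 := by simpa using ph 0
    rw [e3, e4]; ring
  rw [hzero] at hint
  rw [intervalIntegral.integral_add (f := fun u => deriv f u * h u) (g := fun u => f u * deriv h u)
      ((hf'.mul hhc).intervalIntegrable 0 P)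
      ((hfc.mul hh').intervalIntegrable 0 P)] at hint
  linarith

end Slice2


section Slice3
variable {g : ℝ → E2} {P : ℝ}

lemma aderiv_cube (hg : ContDiff ℝ (⊤:ℕ∞) g) (hreg : ∀ u, deriv g u ≠ 0) (u : ℝ) :
    aderiv g (fun x => curv g x ^ 3) u = 3 * curv g u ^ 2 * curvD g 1 u := by
  have hk : HasDerivAt (curv g) (deriv (curv g) u) u :=
    ((curv_smooth hg hreg).differentiable inf_ne_zero u).hasDerivAt
  have h3 : deriv (fun x => curv g x ^ 3) u = 3 * curv g u ^ 2 * deriv (curv g) u := by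
    have := (hk.pow 3).deriv
    simp at this; exact this
  unfold aderiv
  rw [h3]
  show _ = 3 * curv g u ^ 2 * (‖deriv g u‖⁻¹ * deriv (curv g) u)
  ring

lemma I1 (hg : ContDiff ℝ (⊤:ℕ∞) g) (hreg : ∀ u, deriv g u ≠ 0)
    (hper : ∀ u, g (u + P) = g u) :
    cint g P (fun u => curv g u * curvD g 4 u) = cint g P (fun u => curvD g 2 u ^ 2) := by
  have e1 : cint g P (fun u => curv g u * curvD g 4 u)
      = - cint g P (fun u => curvD g 1 u * curvD g 3 u) :=
    cint_IBP hg hreg hper (curv_smooth hg hreg) (curvD_smooth hg hreg 3)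
      (curv_periodic hper) (curvD_periodic hper 3)
  have e2 : cint g P (fun u => curvD g 1 u * curvD g 3 u)
      = - cint g P (fun u => curvD g 2 u * curvD g 2 u) :=
    cint_IBP hg hreg hper (curvD_smooth hg hreg 1) (curvD_smooth hg hreg 2)
      (curvD_periodic hper 1) (curvD_periodic hper 2)
  rw [e1, e2, neg_neg]
  congr 1; funext u; ring

lemma I2 (hg : ContDiff ℝ (⊤:ℕ∞) g) (hreg : ∀ u, deriv g u ≠ 0)
    (hper : ∀ u, g (u + P) = g u) :
    cint g P (fun u => curv g u ^ 3 * curvD g 2 u)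
      = -3 * cint g P (fun u => curvD g 1 u ^ 2 * curv g u ^ 2) := by
  have hcube : ContDiff ℝ (⊤:ℕ∞) (fun x => curv g x ^ 3) := (curv_smooth hg hreg).pow 3
  have pcube : ∀ u, curv g (u + P) ^ 3 = curv g u ^ 3 := fun u => by
    rw [curv_periodic hper]
  have e1 : cint g P (fun u => curv g u ^ 3 * curvD g 2 u)
      = - cint g P (fun u => aderiv g (fun x => curv g x ^ 3) u * curvD g 1 u) :=
    cint_IBP hg hreg hper hcube (curvD_smooth hg hreg 1) pcube (curvD_periodic hper 1)
  rw [e1]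
  unfold cint
  rw [← intervalIntegral.integral_const_mul]
  rw [← intervalIntegral.integral_neg]
  congr 1; funext u
  simp only [aderiv_cube hg hreg]
  ring

lemma key_zero (hg : ContDiff ℝ (⊤:ℕ∞) g) (hreg : ∀ u, deriv g u ≠ 0)
    (hper : ∀ u, g (u + P) = g u) (ω : ℤ) (hω : ω ≠ 0)
    (hw : cint g P (curv g) = 2 * π * (ω:ℝ)) :
    cint g P (fun u => curv g u * (Gq g u + hTerm g P ω)) = 0 := by
  set c := hTerm g P ω with hc
  set A := cint g P (fun u => curvD g 2 u ^ 2) with hA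
  set B := cint g P (fun u => curvD g 1 u ^ 2 * curv g u ^ 2) with hB
  -- continuity helpers
  have hq : Continuous (fun u => ‖deriv g u‖) := (q_smooth hg hreg).continuous
  have hk : Continuous (curv g) := (curv_smooth hg hreg).continuous
  have hkd : ∀ m, Continuous (curvD g m) := fun m => (curvD_smooth hg hreg m).continuous
  have int1 : IntervalIntegrable (fun u => curv g u * curvD g 4 u * ‖deriv g u‖)
      volume 0 P := (((hk.mul (hkd 4)).mul hq)).intervalIntegrable 0 P
  have int2 : IntervalIntegrable (fun u => curv g u ^ 3 * curvD g 2 u * ‖deriv g u‖)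
      volume 0 P := ((((hk.pow 3).mul (hkd 2)).mul hq)).intervalIntegrable 0 P
  have int3 : IntervalIntegrable
      (fun u => (-(1/2) : ℝ) * (curvD g 1 u ^ 2 * curv g u ^ 2 * ‖deriv g u‖))
      volume 0 P :=
    (continuous_const.mul (((hkd 1).pow 2).mul (hk.pow 2) |>.mul hq)).intervalIntegrable 0 P
  have int4 : IntervalIntegrable (fun u => c * (curv g u * ‖deriv g u‖)) volume 0 P :=
    (continuous_const.mul (hk.mul hq)).intervalIntegrable 0 P
  have expand : (fun u => curv g u * (Gq g u + c) * ‖deriv g u‖)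
      = fun u => curv g u * curvD g 4 u * ‖deriv g u‖
        + curv g u ^ 3 * curvD g 2 u * ‖deriv g u‖
        + ((-(1/2) : ℝ) * (curvD g 1 u ^ 2 * curv g u ^ 2 * ‖deriv g u‖)
        + c * (curv g u * ‖deriv g u‖)) := by
    funext u
    unfold Gq
    ring
  have split : cint g P (fun u => curv g u * (Gq g u + c))
      = cint g P (fun u => curv g u * curvD g 4 u)
        + cint g P (fun u => curv g u ^ 3 * curvD g 2 u)
        + ((-(1/2)) * B + c * cint g P (curv g)) := by
    unfold cint
    rw [expand]
    rw [intervalIntegral.integral_add (int1.add int2) (int3.add int4),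
      intervalIntegral.integral_add int1 int2,
      intervalIntegral.integral_add int3 int4,
      intervalIntegral.integral_const_mul, intervalIntegral.integral_const_mul]
    rfl
  rw [split, I1 hg hreg hper, I2 hg hreg hper, hw, ← hA, ← hB]
  rw [hc]
  unfold hTerm
  rw [← hA, ← hB]
  have hπ : (π : ℝ) ≠ 0 := Real.pi_ne_zero
  have hωr : (ω : ℝ) ≠ 0 := Int.cast_ne_zero.mpr hω
  field_simp
  ring
end Slice3
section Main
open Filter Topology

variable {T P : ℝ} {γ : ℝ → ℝ → E2}

def SS (T : ℝ) : Set (ℝ × ℝ) := (univ : Set ℝ) ×ˢ Ico (0:ℝ) T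
def UU (T : ℝ) : Set (ℝ × ℝ) := (univ : Set ℝ) ×ˢ Ioo (0:ℝ) T
def Gam (γ : ℝ → ℝ → E2) : ℝ × ℝ → E2 := fun p => γ p.1 p.2
def Phi (γ : ℝ → ℝ → E2) : ℝ × ℝ → (ℝ × ℝ →L[ℝ] E2) := fderiv ℝ (Gam γ)
def Psi (γ : ℝ → ℝ → E2) : ℝ × ℝ → (ℝ × ℝ →L[ℝ] (ℝ × ℝ →L[ℝ] E2)) := fderiv ℝ (Phi γ)
def rho (γ : ℝ → ℝ → E2) : ℝ × ℝ → ℝ := fun p =>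
  (inner ℝ (Psi γ p (0,1) (1,0)) (Phi γ p (1,0)) : ℝ) / ‖Phi γ p (1,0)‖

lemma UU_open : IsOpen (UU T) := isOpen_univ.prod isOpen_Ioo
lemma UU_sub : UU T ⊆ SS T := prod_mono subset_rfl Ioo_subset_Ico_self
lemma mem_UU {u t : ℝ} (ht : t ∈ Ioo 0 T) : (u, t) ∈ UU T := ⟨mem_univ u, ht⟩
lemma mem_SS {u t : ℝ} (ht : t ∈ Ico 0 T) : (u, t) ∈ SS T := ⟨mem_univ u, ht⟩

lemma inf_add_one_le : ((⊤:ℕ∞) : WithTop ℕ∞) + 1 ≤ ((⊤:ℕ∞) : WithTop ℕ∞) := by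
  norm_cast

lemma slice_smooth (hγ : ContDiffOn ℝ (⊤ : ℕ∞) (Gam γ) (SS T)) (t : ℝ) (ht : t ∈ Ico 0 T) : ContDiff ℝ (⊤:ℕ∞) (fun u => γ u t) := by
  have h1 : ContDiffOn ℝ (⊤:ℕ∞) (Gam γ) (SS T) := hγ.of_le (by simp)
  have h2 : ContDiff ℝ (⊤:ℕ∞) (fun u : ℝ => (u, t)) := contDiff_id.prodMk contDiff_const
  have h3 : ContDiffOn ℝ (⊤:ℕ∞) (fun u : ℝ => γ u t) univ :=
    h1.comp (h2.contDiffOn) (fun u _ => mem_SS ht)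
  exact contDiffOn_univ.mp h3

lemma Gam_contDiffAt (hγ : ContDiffOn ℝ (⊤ : ℕ∞) (Gam γ) (SS T)) {p : ℝ × ℝ} (hp : p ∈ UU T) : ContDiffAt ℝ (⊤:ℕ∞) (Gam γ) p :=
  (hγ.of_le (by simp)).contDiffAt (mem_nhds_iff.mpr ⟨UU T, UU_sub, UU_open, hp⟩)

lemma Gam_hasFDerivAt (hγ : ContDiffOn ℝ (⊤ : ℕ∞) (Gam γ) (SS T)) {p : ℝ × ℝ} (hp : p ∈ UU T) :
    HasFDerivAt (Gam γ) (Phi γ p) p :=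
  (((Gam_contDiffAt hγ hp).differentiableAt inf_ne_zero)).hasFDerivAt

lemma Phi_contDiffOn (hγ : ContDiffOn ℝ (⊤ : ℕ∞) (Gam γ) (SS T)) : ContDiffOn ℝ (⊤:ℕ∞) (Phi γ) (UU T) := by
  have h1 : ContDiffOn ℝ (⊤:ℕ∞) (Gam γ) (UU T) := (hγ.of_le (by simp)).mono UU_sub
  exact h1.fderiv_of_isOpen UU_open inf_add_one_le

lemma Phi_hasFDerivAt (hγ : ContDiffOn ℝ (⊤ : ℕ∞) (Gam γ) (SS T)) {p : ℝ × ℝ} (hp : p ∈ UU T) :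
    HasFDerivAt (Phi γ) (Psi γ p) p :=
  ((((Phi_contDiffOn hγ).differentiableOn inf_ne_zero)).differentiableAt
    (UU_open.mem_nhds hp)).hasFDerivAt

lemma Psi_symm (hγ : ContDiffOn ℝ (⊤ : ℕ∞) (Gam γ) (SS T)) {p : ℝ × ℝ} (hp : p ∈ UU T) (v w : ℝ × ℝ) :
    Psi γ p v w = Psi γ p w v := by
  refine second_derivative_symmetric_of_eventually (f := Gam γ) ?_ (Phi_hasFDerivAt hγ hp) v w
  filter_upwards [UU_open.mem_nhds hp] with y hy
  exact Gam_hasFDerivAt hγ hy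

lemma hasDerivAt_slice_u (hγ : ContDiffOn ℝ (⊤ : ℕ∞) (Gam γ) (SS T)) {u t : ℝ} (ht : t ∈ Ioo 0 T) :
    HasDerivAt (fun x => γ x t) (Phi γ (u,t) (1,0)) u := by
  have hline : HasDerivAt (fun x : ℝ => ((x, t) : ℝ × ℝ)) ((1:ℝ), (0:ℝ)) u :=
    (hasDerivAt_id u).prodMk (hasDerivAt_const u t)
  exact (Gam_hasFDerivAt hγ (mem_UU ht)).comp_hasDerivAt u hline

lemma hasDerivAt_slice_t (hγ : ContDiffOn ℝ (⊤ : ℕ∞) (Gam γ) (SS T)) {u t : ℝ} (ht : t ∈ Ioo 0 T) :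
    HasDerivAt (fun s => γ u s) (Phi γ (u,t) (0,1)) t := by
  have hline : HasDerivAt (fun x : ℝ => ((u, x) : ℝ × ℝ)) ((0:ℝ), (1:ℝ)) t :=
    (hasDerivAt_const t u).prodMk (hasDerivAt_id t)
  exact (Gam_hasFDerivAt hγ (mem_UU ht)).comp_hasDerivAt t hline

lemma hasDerivAt_W_t (hγ : ContDiffOn ℝ (⊤ : ℕ∞) (Gam γ) (SS T)) {u t : ℝ} (ht : t ∈ Ioo 0 T) :
    HasDerivAt (fun x => Phi γ (u,x) (1,0)) (Psi γ (u,t) (0,1) (1,0)) t := by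
  have hline : HasDerivAt (fun x : ℝ => ((u, x) : ℝ × ℝ)) ((0:ℝ), (1:ℝ)) t :=
    (hasDerivAt_const t u).prodMk (hasDerivAt_id t)
  have hc : HasDerivAt (fun x => Phi γ (u,x)) (Psi γ (u,t) (0,1)) t :=
    (Phi_hasFDerivAt hγ (mem_UU ht)).comp_hasDerivAt t hline
  have := hc.clm_apply (hasDerivAt_const t ((1:ℝ),(0:ℝ)))
  simpa using this

lemma hasDerivAt_V_u (hγ : ContDiffOn ℝ (⊤ : ℕ∞) (Gam γ) (SS T)) {u t : ℝ} (ht : t ∈ Ioo 0 T) :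
    HasDerivAt (fun x => Phi γ (x,t) (0,1)) (Psi γ (u,t) (1,0) (0,1)) u := by
  have hline : HasDerivAt (fun x : ℝ => ((x, t) : ℝ × ℝ)) ((1:ℝ), (0:ℝ)) u :=
    (hasDerivAt_id u).prodMk (hasDerivAt_const u t)
  have hc : HasDerivAt (fun x => Phi γ (x,t)) (Psi γ (u,t) (1,0)) u :=
    (Phi_hasFDerivAt hγ (mem_UU ht)).comp_hasDerivAt u hline
  have := hc.clm_apply (hasDerivAt_const u ((0:ℝ),(1:ℝ)))
  simpa using this

lemma hasDerivAt_q_t (hγ : ContDiffOn ℝ (⊤ : ℕ∞) (Gam γ) (SS T)) {u t : ℝ} (ht : t ∈ Ioo 0 T)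
    (hne : Phi γ (u,t) (1,0) ≠ 0) :
    HasDerivAt (fun x => ‖Phi γ (u,x) (1,0)‖) (rho γ (u,t)) t := by
  set W := fun x => Phi γ (u,x) (1,0) with hW
  set D := Psi γ (u,t) (0,1) (1,0) with hD
  have hWd : HasDerivAt W D t := hasDerivAt_W_t hγ ht
  have hinner : HasDerivAt (fun x => (inner ℝ (W x) (W x) : ℝ))
      ((inner ℝ (W t) D : ℝ) + (inner ℝ D (W t) : ℝ)) t := hWd.inner ℝ hWd
  have hpos : (0:ℝ) < (inner ℝ (W t) (W t) : ℝ) := by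
    rw [real_inner_self_eq_norm_mul_norm]
    have := norm_pos_iff.mpr hne
    positivity
  have hsq : HasDerivAt (fun x => Real.sqrt ((inner ℝ (W x) (W x) : ℝ)))
      (((inner ℝ (W t) D : ℝ) + (inner ℝ D (W t) : ℝ)) / (2 * Real.sqrt (inner ℝ (W t) (W t) : ℝ))) t :=
    hinner.sqrt (ne_of_gt hpos)
  have heq : (fun x => Real.sqrt ((inner ℝ (W x) (W x) : ℝ))) = fun x => ‖W x‖ := by
    funext x
    rw [real_inner_self_eq_norm_mul_norm, Real.sqrt_mul_self (norm_nonneg _)]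
  rw [heq] at hsq
  have hval : ((inner ℝ (W t) D : ℝ) + (inner ℝ D (W t) : ℝ))
      / (2 * Real.sqrt (inner ℝ (W t) (W t) : ℝ)) = rho γ (u,t) := by
    rw [real_inner_self_eq_norm_mul_norm, Real.sqrt_mul_self (norm_nonneg _)]
    show ((inner ℝ (W t) D : ℝ) + (inner ℝ D (W t) : ℝ)) / (2 * ‖W t‖)
      = (inner ℝ D (W t) : ℝ) / ‖W t‖
    rw [real_inner_comm (W t) D]
    have : ‖W t‖ ≠ 0 := norm_ne_zero_iff.mpr hne
    field_simp
    ring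
  rw [hval] at hsq
  exact hsq

end Main
section Main2
open Filter Topology

variable {T P : ℝ} {γ : ℝ → ℝ → E2}

lemma Phi_ne_zero (hγ : ContDiffOn ℝ (⊤ : ℕ∞) (Gam γ) (SS T))
    (hreg : ∀ u, ∀ t ∈ Ico (0:ℝ) T, deriv (fun x => γ x t) u ≠ 0)
    {p : ℝ × ℝ} (hp : p ∈ UU T) : Phi γ p (1,0) ≠ 0 := by
  have hI : p.2 ∈ Ioo 0 T := hp.2
  have := (hasDerivAt_slice_u hγ (u := p.1) hI).deriv
  rw [← this]
  exact hreg p.1 p.2 (Ioo_subset_Ico_self hI)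

lemma rho_contOn (hγ : ContDiffOn ℝ (⊤ : ℕ∞) (Gam γ) (SS T))
    (hreg : ∀ u, ∀ t ∈ Ico (0:ℝ) T, deriv (fun x => γ x t) u ≠ 0) :
    ContinuousOn (rho γ) (UU T) := by
  have hΦc : ContinuousOn (Phi γ) (UU T) := (Phi_contDiffOn hγ).continuousOn
  have hΨc : ContinuousOn (Psi γ) (UU T) :=
    (Phi_contDiffOn hγ).continuousOn_fderiv_of_isOpen UU_open one_le_inf
  have hW : ContinuousOn (fun p => Phi γ p ((1:ℝ),(0:ℝ))) (UU T) :=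
    hΦc.clm_apply continuousOn_const
  have hD : ContinuousOn (fun p => Psi γ p ((0:ℝ),(1:ℝ)) ((1:ℝ),(0:ℝ))) (UU T) :=
    (hΨc.clm_apply continuousOn_const).clm_apply continuousOn_const
  exact (hD.inner hW).div hW.norm (fun p hp => norm_ne_zero_iff.mpr (Phi_ne_zero hγ hreg hp))

lemma rho_cont_slice (hγ : ContDiffOn ℝ (⊤ : ℕ∞) (Gam γ) (SS T))
    (hreg : ∀ u, ∀ t ∈ Ico (0:ℝ) T, deriv (fun x => γ x t) u ≠ 0)
    {t : ℝ} (ht : t ∈ Ioo 0 T) : Continuous (fun u => rho γ (u, t)) := by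
  have := (rho_contOn hγ hreg).comp_continuous
    (continuous_id.prodMk continuous_const) (fun u => mem_UU ht)
  exact this

lemma hasDerivAt_len (hγ : ContDiffOn ℝ (⊤ : ℕ∞) (Gam γ) (SS T))
    (hreg : ∀ u, ∀ t ∈ Ico (0:ℝ) T, deriv (fun x => γ x t) u ≠ 0)
    {t₀ : ℝ} (ht₀ : t₀ ∈ Ioo 0 T) :
    HasDerivAt (fun t => ∫ u in (0:ℝ)..P, ‖deriv (fun x => γ x t) u‖)
      (∫ u in (0:ℝ)..P, rho γ (u, t₀)) t₀ := by
  obtain ⟨ht₀0, ht₀T⟩ := ht₀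
  set ε : ℝ := min (t₀/2) ((T - t₀)/2) with hε
  have hεpos : 0 < ε := by
    apply lt_min <;> linarith
  have hIccsub : Icc (t₀ - ε) (t₀ + ε) ⊆ Ioo 0 T := by
    intro x hx
    have h1 : ε ≤ t₀/2 := min_le_left _ _
    have h2 : ε ≤ (T - t₀)/2 := min_le_right _ _
    exact ⟨by linarith [hx.1], by linarith [hx.2]⟩
  have hball : Metric.ball t₀ ε ⊆ Icc (t₀ - ε) (t₀ + ε) := by
    intro x hx
    rw [Metric.mem_ball, Real.dist_eq, abs_lt] at hx
    exact ⟨by linarith [hx.1], by linarith [hx.2]⟩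
  have hballIoo : Metric.ball t₀ ε ⊆ Ioo 0 T := fun x hx => hIccsub (hball hx)
  set K : Set (ℝ × ℝ) := uIcc (0:ℝ) P ×ˢ Icc (t₀ - ε) (t₀ + ε) with hK
  have hKcomp : IsCompact K := isCompact_uIcc.prod isCompact_Icc
  have hKU : K ⊆ UU T := fun p hp => ⟨mem_univ _, hIccsub hp.2⟩
  obtain ⟨C, hC⟩ := hKcomp.exists_bound_of_continuousOn ((rho_contOn hγ hreg).mono hKU)
  have key := (intervalIntegral.hasDerivAt_integral_of_dominated_loc_of_deriv_le
    (F := fun x u => ‖deriv (fun y => γ y x) u‖)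
    (F' := fun x u => rho γ (u, x)) (x₀ := t₀) (a := 0) (b := P)
    (bound := fun _ => C) (μ := volume) (Metric.ball_mem_nhds t₀ hεpos) ?_ ?_ ?_ ?_ ?_ ?_).2
  · exact key
  · -- measurability of F x near t₀
    filter_upwards [isOpen_Ioo.mem_nhds ⟨ht₀0, ht₀T⟩] with x hx
    exact ((deriv_g_smooth (slice_smooth hγ x (Ioo_subset_Ico_self hx))).continuous.norm
      ).aestronglyMeasurable
  · exact ((deriv_g_smooth (slice_smooth hγ t₀ (Ioo_subset_Ico_self ⟨ht₀0, ht₀T⟩))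
      ).continuous.norm).intervalIntegrable 0 P
  · exact (rho_cont_slice hγ hreg ⟨ht₀0, ht₀T⟩).aestronglyMeasurable
  · refine Filter.Eventually.of_forall (fun u hu x hx => ?_)
    exact hC (u, x) ⟨uIoc_subset_uIcc hu, hball hx⟩
  · exact intervalIntegrable_const
  · refine Filter.Eventually.of_forall (fun u hu x hx => ?_)
    have hxI : x ∈ Ioo 0 T := hballIoo hx
    have hne : Phi γ (u, x) (1,0) ≠ 0 := Phi_ne_zero hγ hreg (mem_UU hxI)
    have base : HasDerivAt (fun s => ‖Phi γ (u,s) (1,0)‖) (rho γ (u,x)) x :=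
      hasDerivAt_q_t hγ hxI hne
    apply base.congr_of_eventuallyEq
    filter_upwards [Metric.isOpen_ball.mem_nhds hx] with y hy
    exact ((hasDerivAt_slice_u hγ (hballIoo hy)).deriv).symm ▸ rfl

end Main2
section Main3
open Filter Topology

variable {T P : ℝ} {γ : ℝ → ℝ → E2} {ω : ℤ}

lemma integral_rho_zero
    (hγ : ContDiffOn ℝ (⊤ : ℕ∞) (Gam γ) (SS T))
    (hper : ∀ u, ∀ t ∈ Ico (0:ℝ) T, γ (u + P) t = γ u t)
    (hreg : ∀ u, ∀ t ∈ Ico (0:ℝ) T, deriv (fun x => γ x t) u ≠ 0)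
    (hω : ω ≠ 0)
    (hwind : ∀ t ∈ Ico (0:ℝ) T,
      (ω : ℝ) = (1 / (2 * π)) * cint (fun x => γ x t) P (curv (fun x => γ x t)))
    (hflow : ∀ u, ∀ t ∈ Ico (0:ℝ) T,
      (inner ℝ (derivWithin (fun s => γ u s) (Ico 0 T) t)
          (normalV (fun x => γ x t) u) : ℝ)
        = Gq (fun x => γ x t) u + hTerm (fun x => γ x t) P ω)
    {t₀ : ℝ} (ht₀ : t₀ ∈ Ioo 0 T) :
    ∫ u in (0:ℝ)..P, rho γ (u, t₀) = 0 := by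
  have ht₀' : t₀ ∈ Ico 0 T := Ioo_subset_Ico_self ht₀
  set g : ℝ → E2 := fun x => γ x t₀ with hgdef
  have hg : ContDiff ℝ (⊤:ℕ∞) g := slice_smooth hγ t₀ ht₀'
  have hrg : ∀ u, deriv g u ≠ 0 := fun u => hreg u t₀ ht₀'
  have hpg : ∀ u, g (u + P) = g u := fun u => hper u t₀ ht₀'
  have Weq : ∀ u : ℝ, Phi γ (u, t₀) (1,0) = deriv g u := fun u =>
    ((hasDerivAt_slice_u hγ (u := u) ht₀).deriv).symm
  set Vt : ℝ → E2 := fun u => Phi γ (u, t₀) (0,1) with hVtdef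
  have Veq : ∀ u : ℝ, Vt u = deriv (fun s => γ u s) t₀ := fun u =>
    ((hasDerivAt_slice_t hγ (u := u) ht₀).deriv).symm
  have hIco_nhds : Ico (0:ℝ) T ∈ 𝓝 t₀ :=
    mem_nhds_iff.mpr ⟨Ioo 0 T, Ioo_subset_Ico_self, isOpen_Ioo, ht₀⟩
  have VeqW : ∀ u : ℝ, derivWithin (fun s => γ u s) (Ico 0 T) t₀ = Vt u := fun u => by
    rw [derivWithin_of_mem_nhds hIco_nhds, Veq]
  have hVflow : ∀ u, (inner ℝ (Vt u) (normalV g u) : ℝ) = Gq g u + hTerm g P ω := fun u => by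
    rw [← VeqW]; exact hflow u t₀ ht₀'
  have Vper : ∀ u, Vt (u + P) = Vt u := by
    intro u
    rw [Veq, Veq]
    apply Filter.EventuallyEq.deriv_eq
    filter_upwards [isOpen_Ioo.mem_nhds ht₀] with s hs
    exact hper u s (Ioo_subset_Ico_self hs)
  have hτs : ContDiff ℝ (⊤:ℕ∞) (tangentV g) := tangent_smooth hg hrg
  have hτd : ∀ u, HasDerivAt (tangentV g) (deriv (tangentV g) u) u := fun u =>
    ((hτs.differentiable inf_ne_zero) u).hasDerivAt
  have hVd : ∀ u : ℝ, HasDerivAt Vt (Psi γ (u, t₀) (1,0) (0,1)) u := fun u =>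
    hasDerivAt_V_u hγ ht₀
  set φ : ℝ → ℝ := fun u => (inner ℝ (Vt u) (tangentV g u) : ℝ) with hφdef
  have hφd : ∀ u, HasDerivAt φ
      ((inner ℝ (Vt u) (deriv (tangentV g) u) : ℝ)
        + (inner ℝ (Psi γ (u,t₀) (1,0) (0,1)) (tangentV g u) : ℝ)) u := fun u =>
    (hVd u).inner ℝ (hτd u)
  have rho_eq : ∀ u : ℝ, rho γ (u, t₀)
      = (inner ℝ (Psi γ (u,t₀) (1,0) (0,1)) (tangentV g u) : ℝ) := by
    intro u
    unfold rho
    rw [Psi_symm hγ (mem_UU (u := u) ht₀) ((0:ℝ),(1:ℝ)) ((1:ℝ),(0:ℝ)), Weq]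
    have hτu : tangentV g u = ‖deriv g u‖⁻¹ • deriv g u := rfl
    rw [hτu, real_inner_smul_right, div_eq_inv_mul]
  have inner_Vt_dτ : ∀ u, (inner ℝ (Vt u) (deriv (tangentV g) u) : ℝ)
      = curv g u * (Gq g u + hTerm g P ω) * ‖deriv g u‖ := by
    intro u
    rw [frenet hg hrg u, real_inner_smul_right, hVflow u]
    ring
  have split : (fun u => rho γ (u, t₀))
      = fun u => deriv φ u - curv g u * (Gq g u + hTerm g P ω) * ‖deriv g u‖ := by
    funext u
    rw [(hφd u).deriv, rho_eq u, inner_Vt_dτ u]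
    ring
  -- continuity
  have hΦc : ContinuousOn (Phi γ) (UU T) := (Phi_contDiffOn hγ).continuousOn
  have hΨc : ContinuousOn (Psi γ) (UU T) :=
    (Phi_contDiffOn hγ).continuousOn_fderiv_of_isOpen UU_open one_le_inf
  have lineC : Continuous (fun u : ℝ => ((u, t₀) : ℝ×ℝ)) :=
    continuous_id.prodMk continuous_const
  have hVtc : Continuous Vt :=
    (hΦc.clm_apply continuousOn_const).comp_continuous lineC (fun u => mem_UU ht₀)
  have hDc : Continuous (fun u => Psi γ (u,t₀) ((1:ℝ),(0:ℝ)) ((0:ℝ),(1:ℝ))) :=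
    ((hΨc.clm_apply continuousOn_const).clm_apply continuousOn_const).comp_continuous
      lineC (fun u => mem_UU ht₀)
  have hτc : Continuous (tangentV g) := hτs.continuous
  have hτdc : Continuous (deriv (tangentV g)) := (deriv_tangent_smooth hg hrg).continuous
  have hφderivc : Continuous (deriv φ) := by
    have hde : deriv φ = fun u => (inner ℝ (Vt u) (deriv (tangentV g) u) : ℝ)
        + (inner ℝ (Psi γ (u,t₀) (1,0) (0,1)) (tangentV g u) : ℝ) :=
      funext fun u => (hφd u).deriv
    rw [hde]
    exact (hVtc.inner hτdc).add (hDc.inner hτc)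
  have hkc : Continuous (curv g) := (curv_smooth hg hrg).continuous
  have hGqc : Continuous (Gq g) := by
    unfold Gq
    exact ((curvD_smooth hg hrg 4).continuous.add
      ((hkc.pow 2).mul (curvD_smooth hg hrg 2).continuous)).sub
      ((continuous_const.mul hkc).mul ((curvD_smooth hg hrg 1).continuous.pow 2))
  have hky : Continuous (fun u => curv g u * (Gq g u + hTerm g P ω) * ‖deriv g u‖) :=
    ((hkc.mul (hGqc.add continuous_const)).mul (q_smooth hg hrg).continuous)
  -- compute
  rw [split, intervalIntegral.integral_sub (hφderivc.intervalIntegrable 0 P)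
    (hky.intervalIntegrable 0 P)]
  have e1 : ∫ u in (0:ℝ)..P, deriv φ u = φ P - φ 0 :=
    intervalIntegral.integral_deriv_eq_sub (fun x _ => (hφd x).differentiableAt)
      (hφderivc.intervalIntegrable 0 P)
  have e2 : φ P = φ 0 := by
    have hV0 : Vt P = Vt 0 := by simpa using Vper 0
    have hτ0 : tangentV g P = tangentV g 0 := by simpa using tangent_periodic hpg 0
    show (inner ℝ (Vt P) (tangentV g P) : ℝ) = (inner ℝ (Vt 0) (tangentV g 0) : ℝ)
    rw [hV0, hτ0]
  have e3 : ∫ u in (0:ℝ)..P, curv g u * (Gq g u + hTerm g P ω) * ‖deriv g u‖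
      = cint g P (fun u => curv g u * (Gq g u + hTerm g P ω)) := rfl
  have hw : cint g P (curv g) = 2 * π * (ω:ℝ) := by
    have h := hwind t₀ ht₀'
    have hπ : (π:ℝ) ≠ 0 := Real.pi_ne_zero
    field_simp at h
    linarith
  rw [e1, e2, e3, key_zero hg hrg hpg ω hω hw]
  simp

end Main3
section Main4
open Filter Topology

variable {T P : ℝ} {γ : ℝ → ℝ → E2}

lemma deriv_slice_eq_fderivWithin (hγ : ContDiffOn ℝ (⊤ : ℕ∞) (Gam γ) (SS T)) (hT : 0 < T)
    {u t : ℝ} (ht : t ∈ Ico 0 T) :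
    deriv (fun x => γ x t) u = fderivWithin ℝ (Gam γ) (SS T) (u, t) ((1:ℝ),(0:ℝ)) := by
  have hud : UniqueDiffOn ℝ (SS T) := by
    apply uniqueDiffOn_convex (convex_univ.prod (convex_Ico 0 T))
    rw [SS, interior_prod_eq, interior_univ, interior_Ico]
    exact ⟨(0, T/2), mem_univ _, by constructor <;> linarith⟩
  have hdiff : DifferentiableOn ℝ (Gam γ) (SS T) :=
    (hγ.of_le (by simp)).differentiableOn inf_ne_zero
  have hFD : HasFDerivWithinAt (Gam γ) (fderivWithin ℝ (Gam γ) (SS T) (u,t)) (SS T) (u,t) :=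
    (hdiff (u,t) (mem_SS ht)).hasFDerivWithinAt
  have line : HasDerivWithinAt (fun x : ℝ => ((x, t) : ℝ × ℝ)) ((1:ℝ),(0:ℝ)) univ u :=
    ((hasDerivAt_id u).prodMk (hasDerivAt_const u t)).hasDerivWithinAt
  have hcomp := hFD.comp_hasDerivWithinAt u line (fun x _ => mem_SS ht)
  rw [hasDerivWithinAt_univ] at hcomp
  exact hcomp.deriv

lemma len_contWithinAt_zero (hγ : ContDiffOn ℝ (⊤ : ℕ∞) (Gam γ) (SS T)) (hT : 0 < T)
    (hreg : ∀ u, ∀ t ∈ Ico (0:ℝ) T, deriv (fun x => γ x t) u ≠ 0) :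
    ContinuousWithinAt (fun t => ∫ u in (0:ℝ)..P, ‖deriv (fun x => γ x t) u‖)
      (Ico 0 T) 0 := by
  have hud : UniqueDiffOn ℝ (SS T) := by
    apply uniqueDiffOn_convex (convex_univ.prod (convex_Ico 0 T))
    rw [SS, interior_prod_eq, interior_univ, interior_Ico]
    exact ⟨(0, T/2), mem_univ _, by constructor <;> linarith⟩
  have hFWc : ContinuousOn (fderivWithin ℝ (Gam γ) (SS T)) (SS T) :=
    (hγ.of_le (by simp)).continuousOn_fderivWithin hud one_le_inf
  have hqK : ContinuousOn (fun p => ‖fderivWithin ℝ (Gam γ) (SS T) p ((1:ℝ),(0:ℝ))‖) (SS T) :=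
    (hFWc.clm_apply continuousOn_const).norm
  set K : Set (ℝ × ℝ) := uIcc (0:ℝ) P ×ˢ Icc 0 (T/2) with hK
  have hKsub : K ⊆ SS T := fun p hp =>
    ⟨mem_univ _, ⟨hp.2.1, lt_of_le_of_lt hp.2.2 (by linarith)⟩⟩
  obtain ⟨C, hC⟩ := (isCompact_uIcc.prod isCompact_Icc).exists_bound_of_continuousOn
    (hqK.mono hKsub)
  apply intervalIntegral.continuousWithinAt_of_dominated_interval
    (bound := fun _ => C) (μ := volume)
  · filter_upwards [self_mem_nhdsWithin] with x hx
    exact ((deriv_g_smooth (slice_smooth hγ x hx)).continuous.norm).aestronglyMeasurable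
  · filter_upwards [self_mem_nhdsWithin,
      mem_nhdsWithin_of_mem_nhds (Iio_mem_nhds (half_pos hT))] with x hx1 hx2
    refine Filter.Eventually.of_forall (fun u hu => ?_)
    rw [norm_norm, deriv_slice_eq_fderivWithin hγ hT hx1]
    have := hC (u, x) ⟨uIoc_subset_uIcc hu, ⟨hx1.1, le_of_lt hx2⟩⟩
    rw [norm_norm] at this
    exact this
  · exact intervalIntegrable_const
  · refine Filter.Eventually.of_forall (fun u hu => ?_)
    have lineC : Continuous (fun x : ℝ => ((u, x) : ℝ × ℝ)) :=
      continuous_const.prodMk continuous_id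
    have hcont : ContinuousOn
        (fun x => ‖fderivWithin ℝ (Gam γ) (SS T) (u,x) ((1:ℝ),(0:ℝ))‖) (Ico 0 T) :=
      hqK.comp lineC.continuousOn (fun x hx => mem_SS hx)
    refine (hcont 0 ⟨le_refl 0, hT⟩).congr (fun y hy => ?_) ?_
    · rw [deriv_slice_eq_fderivWithin hγ hT hy]
    · rw [deriv_slice_eq_fderivWithin hγ hT ⟨le_refl 0, hT⟩]

end Main4


/-- **Length is preserved.**  A smooth solution of the length-constrained ideal curve flow
(`⟨∂ₜγ, ν⟩ = G + h(t)` with `G = k_{s⁴} + k² k_{ss} − ½ k k_s²` and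
`h(t) = (1/(2πω))(−∫ k_{ss}² ds + (7/2) ∫ k_s² k² ds)`, `ω` the constant winding number)
has constant length: `L[γ(·,t)] = L[γ(·,0)]` for all `t ∈ [0,T)`. -/
theorem length_constant
    (T P : ℝ) (hT : 0 < T) (hP : 0 < P) (ω : ℤ) (hω : ω ≠ 0)
    (γ : ℝ → ℝ → E2)
    (hγ : ContDiffOn ℝ (⊤ : ℕ∞) (fun p : ℝ × ℝ => γ p.1 p.2) (univ ×ˢ Ico 0 T))
    (hper : ∀ u, ∀ t ∈ Ico (0:ℝ) T, γ (u + P) t = γ u t)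
    (hreg : ∀ u, ∀ t ∈ Ico (0:ℝ) T, deriv (fun x => γ x t) u ≠ 0)
    (hwind : ∀ t ∈ Ico (0:ℝ) T,
      (ω : ℝ) = (1 / (2 * π)) * cint (fun x => γ x t) P (curv (fun x => γ x t)))
    (hflow : ∀ u, ∀ t ∈ Ico (0:ℝ) T,
      (inner ℝ (derivWithin (fun s => γ u s) (Ico 0 T) t)
          (normalV (fun x => γ x t) u) : ℝ)
        = Gq (fun x => γ x t) u + hTerm (fun x => γ x t) P ω) :
    ∀ t ∈ Ico (0:ℝ) T, clen (fun x => γ x t) P = clen (fun x => γ x 0) P := by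
  have hγ' : ContDiffOn ℝ (⊤ : ℕ∞) (Gam γ) (SS T) := hγ
  intro t ht
  rcases eq_or_lt_of_le ht.1 with h0 | h0
  · rw [← h0]
  set F : ℝ → ℝ := fun s => ∫ u in (0:ℝ)..P, ‖deriv (fun x => γ x s) u‖ with hF
  have ht' : t ∈ Set.Ioo 0 T := ⟨h0, ht.2⟩
  have hFconst : ∀ s1 ∈ Set.Ioo (0:ℝ) T, ∀ s2 ∈ Set.Ioo (0:ℝ) T, s1 ≤ s2 → F s2 = F s1 := by
    intro s1 hs1 s2 hs2 h12
    have hcont : ContinuousOn F (Icc s1 s2) := by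
      intro x hx
      have hxI : x ∈ Set.Ioo 0 T := ⟨lt_of_lt_of_le hs1.1 hx.1, lt_of_le_of_lt hx.2 hs2.2⟩
      exact ((hasDerivAt_len hγ' hreg hxI).continuousAt).continuousWithinAt
    have hderiv : ∀ x ∈ Set.Ico s1 s2, HasDerivWithinAt F 0 (Ici x) x := by
      intro x hx
      have hxI : x ∈ Set.Ioo 0 T := ⟨lt_of_lt_of_le hs1.1 hx.1, lt_trans hx.2 hs2.2⟩
      have h := hasDerivAt_len (P := P) hγ' hreg hxI
      rw [integral_rho_zero hγ' hper hreg hω hwind hflow hxI] at h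
      exact h.hasDerivWithinAt
    exact constant_of_has_deriv_right_zero hcont hderiv s2 ⟨h12, le_refl _⟩
  have hlim1 : Filter.Tendsto F (nhdsWithin 0 (Set.Ioo 0 T)) (nhds (F 0)) :=
    ((len_contWithinAt_zero hγ' hT hreg).mono Ioo_subset_Ico_self).tendsto
  have hlim2 : Filter.Tendsto F (nhdsWithin 0 (Set.Ioo 0 T)) (nhds (F t)) := by
    apply Filter.Tendsto.congr' ?_ tendsto_const_nhds
    filter_upwards [self_mem_nhdsWithin] with s hs
    rcases le_total s t with h | h
    · exact hFconst s hs t ht' h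
    · exact (hFconst t ht' s hs h).symm
  have hne : (nhdsWithin (0:ℝ) (Set.Ioo 0 T)).NeBot := by
    rw [← mem_closure_iff_nhdsWithin_neBot, closure_Ioo (ne_of_lt hT)]
    exact ⟨le_refl 0, le_of_lt hT⟩
  exact tendsto_nhds_unique hlim2 hlim1
end
end
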